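/- arXiv:0806.2719 — 10 statements merged into one kernel-verified Lean document; each statement's English description precedes it below -/
import Mathlib

section
/- Let n ≥ 1 and let X ⊆ Y_1 × ⋯ × Y_{n+1} be a Sternfeld-type embedding of a compact metrizable space X with respect to a decomposition X = A_1 ∪ ⋯ ∪ A_{n+1} into zero-dimensional subsets. Then the embedding is basic, i.e. the induced transformation L : C(Z,ℝ) → C(X,ℝ) is surjective: every continuous f : X → ℝ can be written as f(x) = g(y_1) + ⋯ + g(y_{n+1}) for some continuous g : Z → ℝ, where (y_1,…,y_{n+1}) are the coordinates of x. -/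
/-!
Each `A i` is zero-dimensional and Lindelöf, and the fibre of `pᵢ` through each of its points
is a single point, so `A i` is covered by the preimages of countably many pairwise disjoint open
sets `U i m ⊆ Y i`, on each of which `f` is `ε`-close to a constant `c i m`. Compactness of `X`
selects finitely many of them, and Urysohn functions `φ i m` supported in `U i m` give
`g (i, y) = κ⁻¹ ∑ₘ c i m φ i m y` (`κ = n + 1`): every point of `X` sees some `φ i m` at level
one, while disjointness keeps the total weight at most `κ`, whence `‖g‖ ≤ ‖f‖` and
`‖f - L g‖ ≤ (1 - κ⁻¹) ‖f‖ + ε`. Iterating this approximation step and summing the geometric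
series of corrections produces an exact preimage.
-/

open Topology

/-- The topology of pointwise convergence on `C(T, ℝ)`: the topology induced from the
product topology on `ℝ^T` via the canonical injection. -/
def cpTop (T : Type*) [TopologicalSpace T] : TopologicalSpace C(T, ℝ) :=
  TopologicalSpace.induced (fun f => (f : T → ℝ)) Pi.topologicalSpace

/-- A subset `A` of a topological space is zero-dimensional if the subspace `A` has a
topological base consisting of sets clopen in `A`. -/
def ZeroDimSubset {X : Type*} [TopologicalSpace X] (A : Set X) : Prop :=
  ∀ (a : A) (U : Set A), IsOpen U → a ∈ U → ∃ V : Set A, IsClopen V ∧ a ∈ V ∧ V ⊆ U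

/-- The transformation induced by an embedding `X ⊆ Y₁ × ⋯ × Y_k`:
`L g x = g y₁ + ⋯ + g y_k`, where `(y₁, …, y_k)` are the coordinates of `x`, each `yᵢ`
regarded as a point of the disjoint union `Z = Σ i, Y i`. -/
noncomputable def inducedL {ι : Type*} [Fintype ι] {Y : ι → Type*}
    [∀ i, TopologicalSpace (Y i)] (X : Set (Π i, Y i))
    (g : C((Σ i, Y i), ℝ)) : C(X, ℝ) where
  toFun x := ∑ i, g ⟨i, (x : Π i, Y i) i⟩
  continuous_toFun := by
    apply continuous_finset_sum
    intro i _
    exact g.continuous.comp (continuous_sigmaMk.comp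
      ((continuous_apply i).comp continuous_subtype_val))

open Function Set Filter

theorem AddMonoidHom.surjective_of_exists_approx_preimage {E F : Type*}
    [NormedAddCommGroup E] [CompleteSpace E] [NormedAddCommGroup F]
    (T : E →+ F) (hT : Continuous T) {C r : ℝ} (hr₀ : 0 ≤ r) (hr₁ : r < 1)
    (h : ∀ y : F, ∀ ε > 0, ∃ x, ‖x‖ ≤ C * ‖y‖ ∧ ‖y - T x‖ ≤ r * ‖y‖ + ε) :
    Surjective T := by
  set r' := (1 + r) / 2
  have hr'₀ : 0 ≤ r' := by positivity
  have hr'₁ : r' < 1 := by simp only [r']; linarith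
  have step : ∀ y : F, ∃ x, ‖x‖ ≤ C * ‖y‖ ∧ ‖y - T x‖ ≤ r' * ‖y‖ := by
    intro y
    rcases eq_or_ne y 0 with rfl | hy
    · exact ⟨0, by simp⟩
    obtain ⟨x, hx, hyx⟩ := h y ((1 - r) / 2 * ‖y‖) (by have := norm_pos_iff.2 hy; positivity)
    exact ⟨x, hx, hyx.trans_eq (by ring)⟩
  choose G hGnorm hGapprox using step
  intro y
  -- `R k` is the part of `y` not yet reached after `k` approximation steps.
  set R : ℕ → F := fun k => (fun z => z - T (G z))^[k] y
  have hR : ∀ k, R (k + 1) = R k - T (G (R k)) := fun k => iterate_succ_apply' _ k y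
  have hRnorm : ∀ k, ‖R k‖ ≤ r' ^ k * ‖y‖ := by
    intro k
    induction k with
    | zero => simp [R]
    | succ k ih =>
      calc ‖R (k + 1)‖ ≤ r' * ‖R k‖ := hR k ▸ hGapprox (R k)
        _ ≤ r' * (r' ^ k * ‖y‖) := by gcongr
        _ = r' ^ (k + 1) * ‖y‖ := by ring
  have hsum : Summable fun k => G (R k) := by
    refine .of_norm_bounded
      (((summable_geometric_of_lt_one hr'₀ hr'₁).mul_right ‖y‖).mul_left |C|) fun k => ?_
    calc ‖G (R k)‖ ≤ C * ‖R k‖ := hGnorm _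
      _ ≤ |C| * (r' ^ k * ‖y‖) := by gcongr; exacts [le_abs_self C, hRnorm k]
  have hRlim : Tendsto R atTop (𝓝 0) := squeeze_zero_norm hRnorm <| by
    simpa using (tendsto_pow_atTop_nhds_zero_of_lt_one hr'₀ hr'₁).mul_const ‖y‖
  have hpartial : ∀ N, ∑ k ∈ Finset.range N, T (G (R k)) = y - R N := fun N => by
    simp_rw [show ∀ k, T (G (R k)) = R k - R (k + 1) by intro k; rw [hR]; abel]
    exact Finset.sum_range_sub' R N
  refine ⟨∑' k, G (R k), tendsto_nhds_unique ((hsum.hasSum.map T hT).tendsto_sum_nat) ?_⟩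
  have hlim : Tendsto (fun N => y - R N) atTop (𝓝 y) := by
    simpa using tendsto_const_nhds.sub hRlim
  exact hlim.congr fun N => (hpartial N).symm

theorem IsClopen.disjointed {α : Type*} [TopologicalSpace α] {V : ℕ → Set α}
    (h : ∀ m, IsClopen (V m)) (m : ℕ) : IsClopen (disjointed V m) :=
  disjointedRec (fun _ _ ht => ht.diff (h _)) (h m)

theorem exists_isClopen_partition_subordinate {T : Type*} [TopologicalSpace T]
    [SecondCountableTopology T] [Nonempty T]
    (hT : ∀ (a : T) (U : Set T), IsOpen U → a ∈ U → ∃ V, IsClopen V ∧ a ∈ V ∧ V ⊆ U)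
    {O : T → Set T} (hO : ∀ a, IsOpen (O a)) (hmem : ∀ a, a ∈ O a) :
    ∃ (V : ℕ → Set T) (e : ℕ → T), (∀ m, IsClopen (V m)) ∧ Pairwise (Disjoint on V) ∧
      ⋃ m, V m = univ ∧ ∀ m, V m ⊆ O (e m) := by
  choose W hWc hmemW hWO using fun a => hT a (O a) (hO a) (hmem a)
  obtain ⟨S, hSc, hSW⟩ := TopologicalSpace.isOpen_iUnion_countable W fun a => (hWc a).isOpen
  have hcov : ⋃ a ∈ S, W a = univ :=
    hSW.trans (eq_univ_of_forall fun a => mem_iUnion.2 ⟨a, hmemW a⟩)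
  have hS : S.Nonempty := by
    obtain ⟨a, ha, -⟩ := mem_iUnion₂.1 (hcov ▸ mem_univ (Classical.arbitrary T))
    exact ⟨a, ha⟩
  obtain ⟨e, rfl⟩ := hSc.exists_eq_range hS
  refine ⟨disjointed (W ∘ e), e, IsClopen.disjointed fun m => hWc (e m), disjoint_disjointed _,
    ?_, fun m => (disjointed_subset _ m).trans (hWO (e m))⟩
  rw [iUnion_disjointed, ← hcov, biUnion_range]
  rfl

theorem exists_isOpen_pairwise_disjoint_superset {Y ι : Type*} [PseudoEMetricSpace Y]
    {D : ι → Set Y} (hD : ∀ i, Disjoint (D i) (closure (⋃ (j) (_ : j ≠ i), D j))) :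
    ∃ U : ι → Set Y, (∀ i, IsOpen (U i)) ∧ Pairwise (Disjoint on U) ∧ ∀ i, D i ⊆ U i := by
  set E : ι → Set Y := fun i => ⋃ (j) (_ : j ≠ i), D j
  refine ⟨fun i => {y | Metric.infEDist y (D i) < Metric.infEDist y (E i)},
    fun i => isOpen_lt Metric.continuous_infEDist Metric.continuous_infEDist, ?_, ?_⟩
  · intro i j hij
    refine disjoint_left.2 fun y hi hj => ?_
    have hDE : ∀ {i j}, i ≠ j → D j ⊆ E i := fun h => subset_biUnion_of_mem (u := D) h.symm
    exact (hi.trans_le (Metric.infEDist_anti (hDE hij))).not_ge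
      (hj.trans_le (Metric.infEDist_anti (hDE hij.symm))).le
  · intro i y hy
    rw [mem_ofPred_eq, Metric.infEDist_zero_of_mem hy, pos_iff_ne_zero]
    exact fun h => disjoint_left.1 (hD i) hy (Metric.mem_closure_iff_infEDist_zero.2 h)

theorem IsClosedMap.mem_closure_of_mem_closure_image {X Y : Type*} [TopologicalSpace X]
    [TopologicalSpace Y] {p : X → Y} (hp : IsClosedMap p) {x : X}
    (hx : ∀ x', p x' = p x → x' = x) {s : Set X} (h : p x ∈ closure (p '' s)) :
    x ∈ closure s := by
  obtain ⟨x', hx', hpx⟩ := closure_minimal (image_mono subset_closure) (hp _ isClosed_closure) h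
  exact hx x' hpx ▸ hx'

theorem IsClosedMap.exists_isOpen_preimage_subset {X Y : Type*} [TopologicalSpace X]
    [TopologicalSpace Y] {p : X → Y} (hp : IsClosedMap p) {x : X}
    (hx : ∀ x', p x' = p x → x' = x) {N : Set X} (hN : N ∈ 𝓝 x) :
    ∃ W, IsOpen W ∧ p x ∈ W ∧ p ⁻¹' W ⊆ N := by
  refine ⟨(closure (p '' (interior N)ᶜ))ᶜ, isClosed_closure.isOpen_compl, fun h => ?_, ?_⟩
  · have := hp.mem_closure_of_mem_closure_image hx h
    rw [closure_compl, interior_interior] at this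
    exact this (mem_interior_iff_mem_nhds.2 hN)
  · intro x' hx'
    by_contra hx'N
    exact hx' (subset_closure ⟨x', fun h => hx'N (interior_subset h), rfl⟩)

theorem exists_isOpen_pairwise_disjoint_preimage_cover {X Y : Type*} [TopologicalSpace X]
    [CompactSpace X] [TopologicalSpace Y] [TopologicalSpace.MetrizableSpace Y] {p : X → Y}
    (hp : Continuous p) {A : Set X} [SecondCountableTopology A] (hA : ZeroDimSubset A)
    (hfiber : ∀ x ∈ A, ∀ x', p x' = p x → x' = x) (f : C(X, ℝ)) {ε : ℝ} (hε : 0 < ε) :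
    ∃ (U : ℕ → Set Y) (c : ℕ → ℝ), (∀ m, IsOpen (U m)) ∧ Pairwise (Disjoint on U) ∧
      A ⊆ ⋃ m, p ⁻¹' U m ∧ (∀ m x, p x ∈ U m → |f x - c m| ≤ ε) ∧ ∀ m, |c m| ≤ ‖f‖ := by
  rcases isEmpty_or_nonempty A with hA₀ | hA₀
  · refine ⟨fun _ => ∅, fun _ => 0, fun _ => isOpen_empty, fun _ _ _ => disjoint_bot_left,
      fun x hx => isEmptyElim (⟨x, hx⟩ : A), fun _ _ h => h.elim, fun _ => by simp⟩
  let := TopologicalSpace.metrizableSpaceMetric Y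
  have hpc : IsClosedMap p := hp.isClosedMap
  have tube : ∀ a : A, ∃ W, IsOpen W ∧ p a ∈ W ∧ ∀ x, p x ∈ W → |f x - f a| ≤ ε := by
    intro a
    obtain ⟨W, hWo, haW, hW⟩ := hpc.exists_isOpen_preimage_subset (hfiber a a.2)
      (f.continuous.continuousAt.preimage_mem_nhds (Metric.closedBall_mem_nhds (f a) hε))
    exact ⟨W, hWo, haW, fun x hx => hW hx⟩
  choose W hWo haW hWf using tube
  obtain ⟨V, e, hVc, hVd, hVcov, hVW⟩ := exists_isClopen_partition_subordinate hA
    (O := fun a => (p ∘ (↑)) ⁻¹' W a) (fun a => (hWo a).preimage (hp.comp continuous_subtype_val))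
    haW
  set D : ℕ → Set Y := fun m => p '' ((↑) '' V m)
  have hD : ∀ m, Disjoint (D m) (closure (⋃ (l) (_ : l ≠ m), D l)) := by
    refine fun m => disjoint_left.2 ?_
    rintro _ ⟨_, ⟨a, ha, rfl⟩, rfl⟩ hcl
    have hsub : ⋃ (l) (_ : l ≠ m), D l ⊆ p '' ((↑) '' (V m)ᶜ) := by
      refine iUnion₂_subset fun l hlm => image_mono (image_mono fun b hb hbm => ?_)
      exact disjoint_left.1 (hVd hlm) hb hbm
    have := hpc.mem_closure_of_mem_closure_image (hfiber a a.2) (closure_mono hsub hcl)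
    rw [← closure_subtype, (hVc m).compl.isClosed.closure_eq] at this
    exact this ha
  obtain ⟨S, hSo, hSd, hDS⟩ := exists_isOpen_pairwise_disjoint_superset hD
  refine ⟨fun m => W (e m) ∩ S m, fun m => f (e m), fun m => (hWo _).inter (hSo m),
    fun m l hml => (hSd hml).mono inter_subset_right inter_subset_right, fun x hx => ?_,
    fun m x hx => hWf (e m) x hx.1, fun m => by simpa using f.norm_coe_le_norm (e m)⟩
  obtain ⟨m, hm⟩ := mem_iUnion.1 (hVcov ▸ mem_univ (⟨x, hx⟩ : A))
  exact mem_iUnion.2 ⟨m, hVW m hm, hDS m ⟨x, ⟨_, hm, rfl⟩, rfl⟩⟩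

section Estimates

variable {J : Type*} {s : Finset J} {w c : J → ℝ}

theorem Finset.sum_le_one_of_subsingleton_ne_zero (hw : ∀ k ∈ s, w k ∈ Set.Icc (0 : ℝ) 1)
    (hsub : {k | w k ≠ 0}.Subsingleton) : ∑ k ∈ s, w k ≤ 1 := by
  by_cases h : ∃ k ∈ s, w k ≠ 0
  · obtain ⟨k, hk, hwk⟩ := h
    rw [Finset.sum_eq_single_of_mem k hk fun l _ hlk => by_contra fun hwl => hlk (hsub hwl hwk)]
    exact (hw k hk).2
  · push Not at h
    rw [Finset.sum_eq_zero h]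
    exact zero_le_one

theorem abs_sum_mul_le_of_sum_le_one {B : ℝ} (hB : 0 ≤ B) (hw : ∀ k ∈ s, 0 ≤ w k)
    (hw₁ : ∑ k ∈ s, w k ≤ 1) (hc : ∀ k ∈ s, |c k| ≤ B) : |∑ k ∈ s, w k * c k| ≤ B :=
  calc |∑ k ∈ s, w k * c k| ≤ ∑ k ∈ s, w k * B :=
        (Finset.abs_sum_le_sum_abs _ _).trans <| Finset.sum_le_sum fun k hk => by
          rw [abs_mul, abs_of_nonneg (hw k hk)]
          exact mul_le_mul_of_nonneg_left (hc k hk) (hw k hk)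
    _ = (∑ k ∈ s, w k) * B := Finset.sum_mul .. |>.symm
    _ ≤ B := mul_le_of_le_one_left hB hw₁

-- Writing `W = ∑ w`, the error splits as `(1 - W / κ) a + κ⁻¹ ∑ w k (a - c k)`.
theorem abs_sub_inv_mul_sum_mul_le {a B κ ε : ℝ} (hε : 0 ≤ ε) (ha : |a| ≤ B)
    (hw : ∀ k ∈ s, 0 ≤ w k) (hw₁ : 1 ≤ ∑ k ∈ s, w k) (hwκ : ∑ k ∈ s, w k ≤ κ)
    (hc : ∀ k ∈ s, w k ≠ 0 → |a - c k| ≤ ε) :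
    |a - κ⁻¹ * ∑ k ∈ s, w k * c k| ≤ (1 - κ⁻¹) * B + ε := by
  set W := ∑ k ∈ s, w k
  have hκ : 0 < κ := by linarith
  have hWκ : κ⁻¹ * W ≤ 1 := by rw [inv_mul_le_iff₀ hκ]; linarith
  have hsplit : a - κ⁻¹ * ∑ k ∈ s, w k * c k
      = (1 - κ⁻¹ * W) * a + κ⁻¹ * ∑ k ∈ s, w k * (a - c k) := by
    simp only [W, mul_sub, Finset.sum_sub_distrib, ← Finset.sum_mul]
    ring
  have hmain : |(1 - κ⁻¹ * W) * a| ≤ (1 - κ⁻¹) * B := by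
    rw [abs_mul, abs_of_nonneg (by linarith)]
    have : κ⁻¹ ≤ κ⁻¹ * W := le_mul_of_one_le_right (inv_nonneg.2 hκ.le) hw₁
    exact mul_le_mul (by linarith) ha (abs_nonneg a)
      (by linarith [inv_le_one_of_one_le₀ (hw₁.trans hwκ)])
  have hrest : |∑ k ∈ s, w k * (a - c k)| ≤ W * ε :=
    calc |∑ k ∈ s, w k * (a - c k)| ≤ ∑ k ∈ s, w k * ε :=
          (Finset.abs_sum_le_sum_abs _ _).trans <| Finset.sum_le_sum fun k hk => by
            rcases eq_or_ne (w k) 0 with h | h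
            · simp [h]
            rw [abs_mul, abs_of_nonneg (hw k hk)]
            exact mul_le_mul_of_nonneg_left (hc k hk h) (hw k hk)
      _ = W * ε := (Finset.sum_mul ..).symm
  calc |a - κ⁻¹ * ∑ k ∈ s, w k * c k|
      ≤ |(1 - κ⁻¹ * W) * a| + κ⁻¹ * |∑ k ∈ s, w k * (a - c k)| := by
        rw [hsplit, ← abs_of_pos (inv_pos.2 hκ), ← abs_mul, abs_of_pos (inv_pos.2 hκ)]
        exact abs_add_le _ _
    _ ≤ (1 - κ⁻¹) * B + κ⁻¹ * (W * ε) := by gcongr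
    _ ≤ (1 - κ⁻¹) * B + ε := by
        rw [← mul_assoc]; gcongr; exact mul_le_of_le_one_left hε hWκ

end Estimates

section Sternfeld

variable {ι : Type*} [Fintype ι] {Y : ι → Type*} [∀ i, TopologicalSpace (Y i)]

theorem inducedL_add (X : Set (Π i, Y i)) (g h : C((Σ i, Y i), ℝ)) :
    inducedL X (g + h) = inducedL X g + inducedL X h := by
  ext x
  simp [inducedL, Finset.sum_add_distrib]

theorem continuous_inducedL (X : Set (Π i, Y i)) : Continuous (inducedL X) := by
  have : inducedL X = fun g => ∑ i, g.comp ⟨fun x : X => ⟨i, (x : Π i, Y i) i⟩,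
    continuous_sigmaMk.comp ((continuous_apply i).comp continuous_subtype_val)⟩ := by
    funext g
    ext x
    simp [inducedL]
  rw [this]
  exact continuous_finsetSum _ fun i _ => ContinuousMap.continuous_precomp _

-- The ingredients of one step of the successive approximation of `f` by values of `inducedL`.
structure SternfeldCover (X : Set (Π i, Y i)) [CompactSpace X] (f : C(X, ℝ)) (ε : ℝ) where
  pieces : Finset ℕ
  bump : ∀ i, ℕ → C(Y i, ℝ)
  value : ι → ℕ → ℝ
  bump_mem_Icc : ∀ i m y, bump i m y ∈ Set.Icc (0 : ℝ) 1
  sum_bump_le_one : ∀ i y, ∑ m ∈ pieces, bump i m y ≤ 1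
  exists_bump_eq_one : ∀ x : X, ∃ i, ∃ m ∈ pieces, bump i m ((x : Π i, Y i) i) = 1
  abs_sub_value_le : ∀ i m (x : X), bump i m ((x : Π i, Y i) i) ≠ 0 → |f x - value i m| ≤ ε
  abs_value_le : ∀ i m, |value i m| ≤ ‖f‖

namespace SternfeldCover

variable {X : Set (Π i, Y i)} [CompactSpace X] {f : C(X, ℝ)} {ε : ℝ} (S : SternfeldCover X f ε)

noncomputable def approxPreimage : C((Σ i, Y i), ℝ) where
  toFun z := (Fintype.card ι : ℝ)⁻¹ * ∑ m ∈ S.pieces, S.bump z.1 m z.2 * S.value z.1 m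
  continuous_toFun := continuous_sigma fun i => by
    show Continuous fun y : Y i => _ * ∑ m ∈ S.pieces, S.bump i m y * S.value i m
    fun_prop

theorem norm_approxPreimage_le [∀ i, CompactSpace (Y i)] : ‖S.approxPreimage‖ ≤ ‖f‖ := by
  refine (ContinuousMap.norm_le _ (norm_nonneg f)).2 fun ⟨i, y⟩ => ?_
  rw [Real.norm_eq_abs, approxPreimage, ContinuousMap.coe_mk, abs_mul,
    abs_of_nonneg (by positivity)]
  exact (mul_le_of_le_one_left (abs_nonneg _) (Nat.cast_inv_le_one _)).trans
    (abs_sum_mul_le_of_sum_le_one (norm_nonneg f) (fun m _ => (S.bump_mem_Icc i m y).1)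
      (S.sum_bump_le_one i y) fun m _ => S.abs_value_le i m)

theorem norm_sub_inducedL_approxPreimage_le (hε : 0 ≤ ε) :
    ‖f - inducedL X S.approxPreimage‖ ≤ (1 - (Fintype.card ι : ℝ)⁻¹) * ‖f‖ + ε := by
  have h0 : 0 ≤ 1 - (Fintype.card ι : ℝ)⁻¹ := sub_nonneg.2 (Nat.cast_inv_le_one _)
  refine (ContinuousMap.norm_le _ (by positivity)).2 fun x => ?_
  set w : ι × ℕ → ℝ := fun k => S.bump k.1 k.2 ((x : Π i, Y i) k.1)
  have hLg : inducedL X S.approxPreimage x =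
      (Fintype.card ι : ℝ)⁻¹ * ∑ k ∈ Finset.univ ×ˢ S.pieces, w k * S.value k.1 k.2 := by
    simp [inducedL, approxPreimage, w, Finset.mul_sum, Finset.sum_product]
  rw [ContinuousMap.sub_apply, Real.norm_eq_abs, hLg]
  refine abs_sub_inv_mul_sum_mul_le hε (by simpa using f.norm_coe_le_norm x)
    (fun k _ => (S.bump_mem_Icc _ _ _).1) ?_ ?_ fun k _ => S.abs_sub_value_le k.1 k.2 x
  · obtain ⟨i, m, hm, h1⟩ := S.exists_bump_eq_one x
    calc (1 : ℝ) = w (i, m) := h1.symm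
      _ ≤ _ := Finset.single_le_sum (f := w) (fun k _ => (S.bump_mem_Icc _ _ _).1)
        (Finset.mem_product.2 ⟨Finset.mem_univ i, hm⟩)
  · calc ∑ k ∈ Finset.univ ×ˢ S.pieces, w k ≤ ∑ _i : ι, (1 : ℝ) := by
          rw [Finset.sum_product]
          exact Finset.sum_le_sum fun i _ => S.sum_bump_le_one i ((x : Π i, Y i) i)
      _ = Fintype.card ι := by simp

end SternfeldCover

theorem SternfeldCover.nonempty [∀ i, TopologicalSpace.MetrizableSpace (Y i)]
    {X : Set (Π i, Y i)} [CompactSpace X] {A : ι → Set X} (hA : ∀ i, ZeroDimSubset (A i))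
    (hcover : ⋃ i, A i = univ)
    (hfiber : ∀ i, ∀ x ∈ A i, ∀ x' : X, (x' : Π j, Y j) i = (x : Π j, Y j) i → x' = x)
    (f : C(X, ℝ)) {ε : ℝ} (hε : 0 < ε) : Nonempty (SternfeldCover X f ε) := by
  set p : ∀ i, X → Y i := fun i x => (x : Π j, Y j) i
  have hp : ∀ i, Continuous (p i) := fun i => (continuous_apply i).comp continuous_subtype_val
  choose U c hUo hUd hUcov hUf hc using fun i =>
    exists_isOpen_pairwise_disjoint_preimage_cover (hp i) (hA i) (hfiber i) f hε
  set O : ι × ℕ → Set X := fun k => p k.1 ⁻¹' U k.1 k.2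
  have hOcov : ⋃ k, O k = univ := eq_univ_of_forall fun x => by
    obtain ⟨i, hi⟩ := mem_iUnion.1 (hcover ▸ mem_univ x)
    obtain ⟨m, hm⟩ := mem_iUnion.1 (hUcov i hi)
    exact mem_iUnion.2 ⟨(i, m), hm⟩
  -- Each point lies in at most one `U i m` per coordinate `i`.
  have hOfin : ∀ x, {k | x ∈ O k}.Finite := fun x =>
    (finite_iUnion fun i => (finite_singleton i).prod <|
      Set.Subsingleton.finite (s := {m | p i x ∈ U i m}) fun m hm l hl =>
        (hUd i).eq (not_disjoint_iff.2 ⟨_, hm, hl⟩)).subset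
      fun k (hk : p k.1 x ∈ U k.1 k.2) => mem_iUnion.2 ⟨k.1, mem_singleton _, hk⟩
  obtain ⟨v, hvcov, hvo, hvO⟩ :=
    exists_iUnion_eq_closure_subset (u := O) (fun k => (hUo k.1 k.2).preimage (hp k.1)) hOfin
      hOcov
  obtain ⟨t, ht⟩ := isCompact_univ.elim_finite_subcover v hvo hvcov.ge
  have urysohn : ∀ i m, ∃ φ : C(Y i, ℝ), EqOn φ 0 (U i m)ᶜ ∧
      EqOn φ 1 (p i '' closure (v (i, m))) ∧ ∀ y, φ y ∈ Icc (0 : ℝ) 1 := fun i m =>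
    exists_continuous_zero_one_of_isClosed (hUo i m).isClosed_compl
      (isClosed_closure.isCompact.image (hp i)).isClosed
      (disjoint_compl_left_iff_subset.2 (image_subset_iff.2 (hvO (i, m))))
  choose Φ hΦ0 hΦ1 hΦI using urysohn
  have hΦU : ∀ i m y, Φ i m y ≠ 0 → y ∈ U i m := fun i m y h => by_contra (h <| hΦ0 i m ·)
  refine ⟨⟨t.image Prod.snd, Φ, c, hΦI, fun i y => ?_, fun x => ?_,
    fun i m x h => hUf i m x (hΦU i m _ h), hc⟩⟩
  · exact Finset.sum_le_one_of_subsingleton_ne_zero (fun m _ => hΦI i m y)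
      fun m hm l hl => (hUd i).eq (not_disjoint_iff.2 ⟨y, hΦU i m y hm, hΦU i l y hl⟩)
  · obtain ⟨k, hk, hxk⟩ := mem_iUnion₂.1 (ht (mem_univ x))
    exact ⟨k.1, k.2, Finset.mem_image_of_mem _ hk, hΦ1 k.1 k.2 ⟨x, subset_closure hxk, rfl⟩⟩

theorem surjective_inducedL_of_sternfeld [Nonempty ι] [∀ i, CompactSpace (Y i)]
    [∀ i, TopologicalSpace.MetrizableSpace (Y i)]
    {X : Set (Π i, Y i)} [CompactSpace X] {A : ι → Set X} (hA : ∀ i, ZeroDimSubset (A i))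
    (hcover : ⋃ i, A i = univ)
    (hfiber : ∀ i, ∀ x ∈ A i, ∀ x' : X, (x' : Π j, Y j) i = (x : Π j, Y j) i → x' = x) :
    Surjective (inducedL X) :=
  (AddMonoidHom.mk' (inducedL X) (inducedL_add X)).surjective_of_exists_approx_preimage
    (continuous_inducedL X) (sub_nonneg.2 (Nat.cast_inv_le_one _))
    (sub_lt_self _ (inv_pos.2 (Nat.cast_pos.2 Fintype.card_pos))) fun f _ hε =>
    let S := (SternfeldCover.nonempty hA hcover hfiber f hε).some
    ⟨S.approxPreimage, S.norm_approxPreimage_le.trans_eq (one_mul _).symm,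
      S.norm_sub_inducedL_approxPreimage_le hε.le⟩

end Sternfeld

theorem statement3_general {n : ℕ} {Y : Fin (n + 1) → Type*}
    [∀ i, TopologicalSpace (Y i)] [∀ i, CompactSpace (Y i)]
    [∀ i, TopologicalSpace.MetrizableSpace (Y i)]
    (X : Set (Π i, Y i)) [CompactSpace X]
    (A : Fin (n + 1) → Set X) (hA : ∀ i, ZeroDimSubset (A i))
    (hcover : ⋃ i, A i = Set.univ)
    (hfiber : ∀ i, ∀ x ∈ A i, ∀ x' : X, (x' : Π j, Y j) i = (x : Π j, Y j) i → x' = x) :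
    Function.Surjective (inducedL X) :=
  surjective_inducedL_of_sternfeld hA hcover hfiber

/-- A Sternfeld-type embedding is basic: the induced transformation
`L : C(Z, ℝ) → C(X, ℝ)` is surjective, i.e. every continuous `f : X → ℝ` is of the form
`f x = g y₁ + ⋯ + g y_{n+1}` for some continuous `g : Z → ℝ`. -/
theorem statement3 {n : ℕ} (hn : 1 ≤ n) {Y : Fin (n + 1) → Type*}
    [∀ i, TopologicalSpace (Y i)] [∀ i, CompactSpace (Y i)]
    [∀ i, TopologicalSpace.MetrizableSpace (Y i)]
    (X : Set (Π i, Y i)) [CompactSpace X]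
    (A : Fin (n + 1) → Set X) (hA : ∀ i, ZeroDimSubset (A i))
    (hcover : ⋃ i, A i = Set.univ)
    (hfiber : ∀ i, ∀ x ∈ A i, ∀ x' : X, (x' : Π j, Y j) i = (x : Π j, Y j) i → x' = x) :
    Function.Surjective (inducedL X) :=
  statement3_general X A hA hcover hfiber
end

section
/- Let n ≥ 1 and let X ⊆ Y_1 × ⋯ × Y_{n+1} be a Sternfeld-type embedding of a compact metrizable space X with respect to a decomposition X = A_1 ∪ ⋯ ∪ A_{n+1} into zero-dimensional subsets, with induced transformation L. Then for every continuous f : X → ℝ and every real c with ‖f‖ < c, there exists a continuous g : Z → ℝ such that ‖g‖ ≤ ‖f‖/(n+1) (in particular ‖g‖ < c/(n+1)) and ‖f − L(g)‖ < (n/(n+1))·c, where ‖·‖ denotes the sup-norm. -/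
open Topology

/-!
Put `M = ‖f‖`, `β = n c / (n + 1)` and `d = M / (n + 1)`. Every point `x` lies in some `Aᵢ`,
where the fibre of `pᵢ` through `x` is `{x}`; so the points of `Yᵢ` whose whole fibre lies in
`{f > M / 2}` form open sets (`X` is compact) whose preimages cover `{f ≥ β}`. Shrinking this
cover and applying Urysohn's lemma on each `Yᵢ` gives `φᵢ : Yᵢ → [0, 1]` supported there and
with some `φᵢ (pᵢ x) = 1` wherever `f x ≥ β`; the same for `-f` gives `ψᵢ`. Then
`g = d (φᵢ - ψᵢ)` on `Yᵢ` works: where `f > M / 2`, `0 ≤ L g ≤ M` and `L g ≥ d` once `f ≥ β`,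
so `f - L g ∈ (M / 2 - M, M - d] ⊆ (-β, β)`; symmetrically where `f < -M / 2`, and `L g = 0`
where `|f| ≤ M / 2`.
-/

open Set

theorem sub_sum_lt_of_bumps {ι : Type*} [Fintype ι] {a b : ι → ℝ} {d M l β t : ℝ}
    (ha : ∀ i, a i ∈ Icc (0 : ℝ) 1) (hb : ∀ i, b i ∈ Icc (0 : ℝ) 1) (hd : 0 ≤ d)
    (hM : Fintype.card ι * d = M) (hl : 0 ≤ l) (hlβ : l < β) (hMl : M - β < l)
    (hMd : M - d < β) (ht : t ≤ M) (ha_supp : ∀ i, a i ≠ 0 → l < t)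
    (hb_supp : ∀ i, b i ≠ 0 → t < -l) (ha_one : β ≤ t → ∃ i, a i = 1) :
    t - ∑ i, d * (a i - b i) < β := by
  by_cases htl : l < t
  · have hb0 : ∀ i, b i = 0 := fun i => by_contra fun h => by linarith [hb_supp i h]
    simp only [hb0, sub_zero]
    rcases lt_or_ge t β with htβ | htβ
    · linarith [Finset.sum_nonneg fun i (_ : i ∈ Finset.univ) => mul_nonneg hd (ha i).1]
    · obtain ⟨i, hi⟩ := ha_one htβ
      have : d * a i ≤ ∑ j, d * a j :=
        Finset.single_le_sum (fun j _ => mul_nonneg hd (ha j).1) (Finset.mem_univ i)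
      rw [hi, mul_one] at this
      linarith
  · have ha0 : ∀ i, a i = 0 := fun i => by_contra fun h => htl (ha_supp i h)
    simp only [ha0, zero_sub, mul_neg, Finset.sum_neg_distrib, sub_neg_eq_add]
    by_cases hb_ne : ∃ i, b i ≠ 0
    · obtain ⟨i, hi⟩ := hb_ne
      have hsum : ∑ j, d * b j ≤ M := calc
        ∑ j, d * b j ≤ ∑ _j : ι, d :=
          Finset.sum_le_sum fun j _ => mul_le_of_le_one_right hd (hb j).2
        _ = M := by rw [Finset.sum_const, Finset.card_univ, nsmul_eq_mul, hM]
      linarith [hb_supp i hi]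
    · push Not at hb_ne
      simp only [hb_ne, mul_zero, Finset.sum_const_zero, add_zero]
      linarith

theorem abs_sub_sum_lt_of_bumps {ι : Type*} [Fintype ι] {a b : ι → ℝ} {d M l β t : ℝ}
    (ha : ∀ i, a i ∈ Icc (0 : ℝ) 1) (hb : ∀ i, b i ∈ Icc (0 : ℝ) 1) (hd : 0 ≤ d)
    (hM : Fintype.card ι * d = M) (hl : 0 ≤ l) (hlβ : l < β) (hMl : M - β < l)
    (hMd : M - d < β) (ht : |t| ≤ M) (ha_supp : ∀ i, a i ≠ 0 → l < t)
    (hb_supp : ∀ i, b i ≠ 0 → t < -l) (ha_one : β ≤ t → ∃ i, a i = 1)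
    (hb_one : t ≤ -β → ∃ i, b i = 1) :
    |t - ∑ i, d * (a i - b i)| < β := by
  obtain ⟨htM', htM⟩ := abs_le.1 ht
  have hswap : ∑ i, d * (b i - a i) = -∑ i, d * (a i - b i) := by
    rw [← Finset.sum_neg_distrib]; congr 1; ext i; ring
  have hneg := sub_sum_lt_of_bumps (t := -t) hb ha hd hM hl hlβ hMl hMd (by linarith)
    (fun i h => by linarith [hb_supp i h]) (fun i h => by linarith [ha_supp i h])
    (fun h => hb_one (by linarith))
  rw [hswap] at hneg
  rw [abs_lt]
  exact ⟨by linarith,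
    sub_sum_lt_of_bumps ha hb hd hM hl hlβ hMl hMd htM ha_supp hb_supp ha_one⟩

theorem exists_coordinate_bumps {ι X : Type*} [Finite ι] {Y : ι → Type*}
    [TopologicalSpace X] [CompactSpace X] [NormalSpace X] [∀ i, TopologicalSpace (Y i)]
    [∀ i, T2Space (Y i)] [∀ i, NormalSpace (Y i)] {p : ∀ i, X → Y i}
    (hp : ∀ i, Continuous (p i)) (hsep : ∀ x, ∃ i, ∀ x', p i x' = p i x → x' = x)
    {K U : Set X} (hK : IsClosed K) (hU : IsOpen U) (hKU : K ⊆ U) :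
    ∃ φ : ∀ i, C(Y i, ℝ), (∀ i y, φ i y ∈ Icc (0 : ℝ) 1) ∧
      (∀ i x, φ i (p i x) ≠ 0 → x ∈ U) ∧ ∀ x ∈ K, ∃ i, φ i (p i x) = 1 := by
  -- `W i` is the set of points of `Y i` whose whole fibre lies in `U`.
  set W : ∀ i, Set (Y i) := fun i => (p i '' Uᶜ)ᶜ
  have hW_open : ∀ i, IsOpen (W i) := fun i =>
    ((hp i).isClosedMap _ hU.isClosed_compl).isOpen_compl
  have hW_mem : ∀ i x, p i x ∈ W i → x ∈ U := fun i x h =>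
    by_contra fun hx => h ⟨x, hx, rfl⟩
  have hK_cover : K ⊆ ⋃ i, p i ⁻¹' W i := by
    intro x hx
    obtain ⟨i, hi⟩ := hsep x
    refine mem_iUnion.2 ⟨i, ?_⟩
    rintro ⟨x', hx', hpx⟩
    exact hx' (hi x' hpx ▸ hKU hx)
  obtain ⟨v, hKv, hv_closed, hvW⟩ := exists_subset_iUnion_closed_subset hK
    (fun i => (hW_open i).preimage (hp i)) (fun _ _ => toFinite _) hK_cover
  have hurysohn : ∀ i, ∃ φ : C(Y i, ℝ), EqOn φ 0 (W i)ᶜ ∧ EqOn φ 1 (p i '' v i) ∧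
      ∀ y, φ y ∈ Icc (0 : ℝ) 1 := fun i =>
    exists_continuous_zero_one_of_isClosed (hW_open i).isClosed_compl
      ((hv_closed i).isCompact.image (hp i)).isClosed
      (disjoint_compl_left_iff_subset.2 ((image_mono (hvW i)).trans (image_preimage_subset _ _)))
  choose φ hφ0 hφ1 hφI using hurysohn
  refine ⟨φ, hφI, fun i x hx => hW_mem i x (by_contra fun h => hx (hφ0 i h)), fun x hx => ?_⟩
  obtain ⟨i, hi⟩ := mem_iUnion.1 (hKv hx)
  exact ⟨i, hφ1 i ⟨x, hi, rfl⟩⟩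

theorem exists_coordinate_approx {ι X : Type*} [Fintype ι] {Y : ι → Type*}
    [TopologicalSpace X] [CompactSpace X] [NormalSpace X] [∀ i, TopologicalSpace (Y i)]
    [∀ i, T2Space (Y i)] [∀ i, NormalSpace (Y i)] {p : ∀ i, X → Y i}
    (hp : ∀ i, Continuous (p i)) (hsep : ∀ x, ∃ i, ∀ x', p i x' = p i x → x' = x)
    (f : C(X, ℝ)) {d M β : ℝ} (hd : 0 ≤ d) (hM : Fintype.card ι * d = M)
    (hf : ∀ x, |f x| ≤ M) (hMβ : M < 2 * β) (hMd : M - d < β) :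
    ∃ G : ∀ i, C(Y i, ℝ), (∀ i y, |G i y| ≤ d) ∧ ∀ x, |f x - ∑ i, G i (p i x)| < β := by
  obtain ⟨φ, hφI, hφ_supp, hφ_one⟩ := exists_coordinate_bumps hp hsep
    (isClosed_le continuous_const f.continuous) (isOpen_lt continuous_const f.continuous)
    (fun x (hx : x ∈ {x | β ≤ f x}) => show M / 2 < f x by linarith [hx.out])
  obtain ⟨ψ, hψI, hψ_supp, hψ_one⟩ := exists_coordinate_bumps hp hsep
    (isClosed_le f.continuous continuous_const) (isOpen_lt f.continuous continuous_const)
    (fun x (hx : x ∈ {x | f x ≤ -β}) => show f x < -(M / 2) by linarith [hx.out])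
  have hM0 : 0 ≤ M := hM ▸ by positivity
  refine ⟨fun i => d • (φ i - ψ i), fun i y => ?_, fun x => ?_⟩
  · show |d * (φ i y - ψ i y)| ≤ d
    rw [abs_mul, abs_of_nonneg hd]
    exact mul_le_of_le_one_right hd (abs_sub_le_iff.2 ⟨by linarith [(hφI i y).2, (hψI i y).1],
      by linarith [(hφI i y).1, (hψI i y).2]⟩)
  · exact abs_sub_sum_lt_of_bumps (fun i => hφI i _) (fun i => hψI i _) hd hM
      (by linarith) (by linarith) (by linarith) hMd (hf x)
      (fun i h => hφ_supp i x h) (fun i h => hψ_supp i x h)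
      (fun h => hφ_one x h) (fun h => hψ_one x h)

theorem statement4_general {n : ℕ} (hn : 1 ≤ n) {Y : Fin (n + 1) → Type*}
    [∀ i, TopologicalSpace (Y i)] [∀ i, CompactSpace (Y i)]
    [∀ i, TopologicalSpace.MetrizableSpace (Y i)]
    (X : Set (Π i, Y i)) [CompactSpace X]
    (A : Fin (n + 1) → Set X)
    (hcover : ⋃ i, A i = Set.univ)
    (hfiber : ∀ i, ∀ x ∈ A i, ∀ x' : X, (x' : Π j, Y j) i = (x : Π j, Y j) i → x' = x) :
    ∀ (f : C(X, ℝ)) (c : ℝ), ‖f‖ < c →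
      ∃ g : C((Σ i, Y i), ℝ),
        ‖g‖ ≤ ‖f‖ / (n + 1) ∧ ‖f - inducedL X g‖ < ((n : ℝ) / (n + 1)) * c := by
  intro f c hfc
  have hn' : (1 : ℝ) ≤ n := by exact_mod_cast hn
  have hM : 0 ≤ ‖f‖ := norm_nonneg f
  have hd : 0 ≤ ‖f‖ / (n + 1) := by positivity
  have hcard : Fintype.card (Fin (n + 1)) * (‖f‖ / (n + 1)) = ‖f‖ := by
    rw [Fintype.card_fin]; push_cast; field_simp
  have hMβ : ‖f‖ < 2 * ((n : ℝ) / (n + 1) * c) := by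
    rw [show 2 * ((n : ℝ) / (n + 1) * c) = 2 * n * c / (n + 1) by ring,
      lt_div_iff₀ (by positivity)]
    nlinarith
  have hMd : ‖f‖ - ‖f‖ / (n + 1) < (n : ℝ) / (n + 1) * c := by
    rw [show ‖f‖ - ‖f‖ / (n + 1) = n * ‖f‖ / (n + 1) by field_simp; ring,
      show (n : ℝ) / (n + 1) * c = n * c / (n + 1) by ring]
    gcongr
  have hsep : ∀ x : X, ∃ i, ∀ x' : X, (x' : Π j, Y j) i = (x : Π j, Y j) i → x' = x :=
    fun x => let ⟨i, hi⟩ := mem_iUnion.1 (hcover ▸ mem_univ x); ⟨i, hfiber i x hi⟩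
  obtain ⟨G, hG, hfG⟩ := exists_coordinate_approx
    (fun i => (continuous_apply i).comp continuous_subtype_val) hsep f hd hcard
    f.norm_coe_le_norm hMβ hMd
  exact ⟨ContinuousMap.sigma G, (ContinuousMap.norm_le _ hd).2 fun ⟨i, y⟩ => hG i y,
    (ContinuousMap.norm_lt_iff _ (by linarith)).2 hfG⟩

/-- The approximation step for Sternfeld-type embeddings: for every continuous `f : X → ℝ`
and every `c` with `‖f‖ < c` there is a continuous `g : Z → ℝ` with `‖g‖ ≤ ‖f‖/(n+1)` and
`‖f - L g‖ < (n/(n+1))·c`, where `‖·‖` is the sup-norm. -/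
theorem statement4 {n : ℕ} (hn : 1 ≤ n) {Y : Fin (n + 1) → Type*}
    [∀ i, TopologicalSpace (Y i)] [∀ i, CompactSpace (Y i)]
    [∀ i, TopologicalSpace.MetrizableSpace (Y i)]
    (X : Set (Π i, Y i)) [CompactSpace X]
    (A : Fin (n + 1) → Set X) (hA : ∀ i, ZeroDimSubset (A i))
    (hcover : ⋃ i, A i = Set.univ)
    (hfiber : ∀ i, ∀ x ∈ A i, ∀ x' : X, (x' : Π j, Y j) i = (x : Π j, Y j) i → x' = x) :
    ∀ (f : C(X, ℝ)) (c : ℝ), ‖f‖ < c →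
      ∃ g : C((Σ i, Y i), ℝ),
        ‖g‖ ≤ ‖f‖ / (n + 1) ∧ ‖f - inducedL X g‖ < ((n : ℝ) / (n + 1)) * c :=
  statement4_general hn X A hcover hfiber
end

section
/- Let n ≥ 1 and let X ⊆ Y_1 × ⋯ × Y_{n+1} be a Sternfeld-type embedding of a compact metrizable space X with respect to a decomposition X = A_1 ∪ ⋯ ∪ A_{n+1} into zero-dimensional subsets, with induced transformation L. Let Z' be a finite subset of Z and set X' = { x ∈ X : x ∈ A_i and p_i(x) ∈ Z' ∩ Y_i for some i }. Then for every continuous f : X → ℝ vanishing at every point of X' and every real c with ‖f‖ < c, there exists a continuous g : Z → ℝ such that g vanishes at every point of Z', the function f − L(g) vanishes at every point of X', ‖g‖ ≤ ‖f‖/(n+1), and ‖f − L(g)‖ < (n/(n+1))·c. -/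
open Topology

/-- Given a finite subset `Z'` of `Z`, the set `X' ⊆ X` of points `x ∈ Aᵢ` whose `i`-th
coordinate lies in `Z' ∩ Yᵢ` for some `i`. -/
def sternfeldXPrime {n : ℕ} {Y : Fin (n + 1) → Type*} [∀ i, TopologicalSpace (Y i)]
    (X : Set (Π i, Y i)) (A : Fin (n + 1) → Set X)
    (Z' : Set (Σ i, Y i)) : Set X :=
  {x : X | ∃ i, x ∈ A i ∧ (⟨i, (x : Π j, Y j) i⟩ : Σ j, Y j) ∈ Z'}

/-!
Treat the positive and negative parts of `f` separately and recombine them using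
`|u - v| ≤ max u v` for `u, v ≥ 0`. For `f ≥ 0` take `g = (n + 1)⁻¹ • h`, where `h` is a finite
supremum of Urysohn bumps on `Z`. The bump attached to `x ∈ Aᵢ` takes the value
`t = f x - ε/2` at `pᵢ x` and vanishes on `Z'` and on every `p_j x'` with `f x' ≤ t`; these
points form a closed set (`X` is compact) which misses `pᵢ x` by the fiber condition and
because `f` vanishes on `X'`. Hence `h (p_j x') ≤ f x'` for all `j` and `x'`, so `L g ≤ f`,
while near `x` the bump exceeds `f - ε`. By compactness finitely many bumps suffice, and then
`L g ≥ (f - ε)/(n + 1)` everywhere, i.e. `f - L g ≤ n/(n+1)·‖f‖ + ε`.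
-/

open Set

namespace Sternfeld

section

variable {ι : Type*} {Y : ι → Type*} [∀ i, TopologicalSpace (Y i)]
  {X : Set (Π i, Y i)} {Z' : Set (Σ i, Y i)} {f : C(X, ℝ)} {M : ℝ}

theorem continuous_sigmaMk_apply (i : ι) : Continuous fun x : X => (⟨i, x.1 i⟩ : Σ i, Y i) :=
  continuous_sigmaMk.comp ((continuous_apply i).comp continuous_subtype_val)

theorem inducedL_apply [Fintype ι] (g : C((Σ i, Y i), ℝ)) (x : X) :
    inducedL X g x = ∑ i, g ⟨i, x.1 i⟩ :=
  rfl

theorem inducedL_sub [Fintype ι] (g h : C((Σ i, Y i), ℝ)) :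
    inducedL X (g - h) = inducedL X g - inducedL X h := by
  ext x
  simp [inducedL_apply, Finset.sum_sub_distrib]

theorem isClosed_iUnion_image_sublevel [Finite ι] [∀ i, T2Space (Y i)] [CompactSpace X]
    (f : C(X, ℝ)) (t : ℝ) :
    IsClosed (⋃ j, (fun x : X => (⟨j, x.1 j⟩ : Σ i, Y i)) '' {x | f x ≤ t}) :=
  isClosed_iUnion_of_finite fun j => ((isClosed_le f.continuous continuous_const).isCompact.image
    (continuous_sigmaMk_apply j)).isClosed

variable (X Z' f M) in
def admissible : Set C((Σ i, Y i), ℝ) :=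
  {h | (∀ z, 0 ≤ h z ∧ h z ≤ M) ∧ (∀ z ∈ Z', h z = 0) ∧ ∀ i (x : X), h ⟨i, x.1 i⟩ ≤ f x}

theorem zero_mem_admissible (hf0 : 0 ≤ f) (hM : 0 ≤ M) : 0 ∈ admissible X Z' f M :=
  ⟨fun _ => ⟨le_rfl, hM⟩, fun _ _ => rfl, fun _ x => hf0 x⟩

theorem supClosed_admissible : SupClosed (admissible X Z' f M) := by
  rintro g ⟨hg, hgZ, hgf⟩ h ⟨hh, hhZ, hhf⟩
  refine ⟨fun z => ?_, fun z hz => ?_, fun i x => max_le (hgf i x) (hhf i x)⟩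
  · exact ⟨(hg z).1.trans (le_max_left _ _), max_le (hg z).2 (hh z).2⟩
  · simp [hgZ z hz, hhZ z hz]

end

variable {n : ℕ} {Y : Fin (n + 1) → Type*} [∀ i, TopologicalSpace (Y i)]
  [∀ i, TopologicalSpace.MetrizableSpace (Y i)] [∀ i, CompactSpace (Y i)]
  {X : Set (Π i, Y i)} [CompactSpace X] {A : Fin (n + 1) → Set X} {Z' : Set (Σ i, Y i)}
  {f : C(X, ℝ)} {M : ℝ}

theorem exists_mem_admissible_sub_lt (hcover : ⋃ i, A i = univ)
    (hfiber : ∀ i, ∀ x ∈ A i, ∀ x' : X, x'.1 i = x.1 i → x' = x) (hZ' : Z'.Finite)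
    (hf0 : 0 ≤ f) (hfM : ∀ x, f x ≤ M) (hf' : ∀ x ∈ sternfeldXPrime X A Z', f x = 0)
    (x : X) {ε : ℝ} (hε : 0 < ε) :
    ∃ h ∈ admissible X Z' f M, ∃ i, f x - ε < h ⟨i, x.1 i⟩ := by
  obtain ⟨i, hxi⟩ := mem_iUnion.1 (hcover ▸ mem_univ x)
  rcases lt_or_ge (f x) ε with hsmall | hlarge
  · exact ⟨0, zero_mem_admissible hf0 ((hf0 x).trans (hfM x)), i, by simpa using hsmall⟩
  set t := f x - ε / 2 with ht_def
  set B : Set (Σ i, Y i) :=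
    (⋃ j, (fun x' : X => (⟨j, x'.1 j⟩ : Σ i, Y i)) '' {x' | f x' ≤ t}) ∪ Z'
  have hB : IsClosed B := (isClosed_iUnion_image_sublevel f t).union hZ'.isClosed
  have hxB : (⟨i, x.1 i⟩ : Σ i, Y i) ∉ B := by
    rintro (hmem | hmem)
    · obtain ⟨j, x', hx't, hx'x⟩ := by simpa only [mem_iUnion, mem_image] using hmem
      obtain ⟨rfl, hcoord⟩ := Sigma.mk.inj_iff.1 hx'x
      have : f x ≤ t := hfiber j x hxi x' (eq_of_heq hcoord) ▸ hx't
      linarith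
    · linarith [hf' x ⟨i, hxi, hmem⟩]
  obtain ⟨φ, hφB, hφx, hφ01⟩ :=
    exists_continuous_zero_one_of_isClosed hB isClosed_singleton (disjoint_singleton_right.2 hxB)
  have ht : 0 ≤ t := by linarith
  have htM : t ≤ M := by linarith [hfM x]
  refine ⟨t • φ, ⟨fun z => ?_, fun z hz => ?_, fun j x' => ?_⟩, i, ?_⟩
  · simp only [ContinuousMap.smul_apply, smul_eq_mul]
    exact ⟨mul_nonneg ht (hφ01 z).1, (mul_le_of_le_one_right ht (hφ01 z).2).trans htM⟩
  · simp [hφB (subset_union_right hz)]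
  · simp only [ContinuousMap.smul_apply, smul_eq_mul]
    by_cases hx't : f x' ≤ t
    · rw [hφB (subset_union_left (mem_iUnion.2 ⟨j, x', hx't, rfl⟩)), Pi.zero_apply, mul_zero]
      exact hf0 x'
    · exact (mul_le_of_le_one_right ht (hφ01 _).2).trans (le_of_not_ge hx't)
  · rw [ContinuousMap.smul_apply, hφx (mem_singleton _), Pi.one_apply, smul_eq_mul, mul_one]
    linarith

theorem exists_mem_admissible_forall_sub_lt (hcover : ⋃ i, A i = univ)
    (hfiber : ∀ i, ∀ x ∈ A i, ∀ x' : X, x'.1 i = x.1 i → x' = x) (hZ' : Z'.Finite)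
    (hf0 : 0 ≤ f) (hfM : ∀ x, f x ≤ M) (hM : 0 ≤ M)
    (hf' : ∀ x ∈ sternfeldXPrime X A Z', f x = 0) {ε : ℝ} (hε : 0 < ε) :
    ∃ h ∈ admissible X Z' f M, ∀ x : X, ∃ i, f x - ε < h ⟨i, x.1 i⟩ := by
  classical
  choose b hb idx hidx using
    fun x => exists_mem_admissible_sub_lt hcover hfiber hZ' hf0 hfM hf' x hε
  obtain ⟨T, hT⟩ := CompactSpace.elim_nhds_subcover
    (fun x => {x' : X | f x' - ε < b x ⟨idx x, x'.1 (idx x)⟩}) fun x =>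
      (isOpen_lt (by fun_prop) ((b x).continuous.comp (continuous_sigmaMk_apply _))).mem_nhds
        (hidx x)
  set s := insert 0 (T.image b)
  refine ⟨s.sup' (Finset.insert_nonempty _ _) id,
    supClosed_admissible.finsetSup'_mem _ fun h hh => ?_, fun x => ?_⟩
  · rcases Finset.mem_insert.1 hh with rfl | hh
    · exact zero_mem_admissible hf0 hM
    · obtain ⟨x, -, rfl⟩ := Finset.mem_image.1 hh
      exact hb x
  · obtain ⟨k, hkT, hxk⟩ := mem_iUnion₂.1 (hT.ge (mem_univ x))
    have hbk : b k ≤ s.sup' _ id :=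
      Finset.le_sup' id (Finset.mem_insert_of_mem (Finset.mem_image_of_mem b hkT))
    exact ⟨idx k, hxk.trans_le (ContinuousMap.le_def.1 hbk _)⟩

theorem exists_inducedL_approx_of_nonneg (hcover : ⋃ i, A i = univ)
    (hfiber : ∀ i, ∀ x ∈ A i, ∀ x' : X, x'.1 i = x.1 i → x' = x) (hZ' : Z'.Finite)
    (hf0 : 0 ≤ f) (hfM : ∀ x, f x ≤ M) (hM : 0 ≤ M)
    (hf' : ∀ x ∈ sternfeldXPrime X A Z', f x = 0) {ε : ℝ} (hε : 0 < ε) :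
    ∃ g : C((Σ i, Y i), ℝ), (∀ z, 0 ≤ g z ∧ g z ≤ M / (n + 1)) ∧ (∀ z ∈ Z', g z = 0) ∧
      ∀ x, 0 ≤ inducedL X g x ∧ inducedL X g x ≤ f x ∧
        f x - inducedL X g x ≤ n / (n + 1) * M + ε := by
  obtain ⟨h, ⟨hbd, hZ, hle⟩, hcap⟩ :=
    exists_mem_admissible_forall_sub_lt hcover hfiber hZ' hf0 hfM hM hf' hε
  have hn : (0 : ℝ) < n + 1 := by positivity
  refine ⟨((n : ℝ) + 1)⁻¹ • h, fun z => ?_, fun z hz => by simp [hZ z hz], fun x => ?_⟩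
  · simp only [ContinuousMap.smul_apply, smul_eq_mul, inv_mul_eq_div]
    exact ⟨div_nonneg (hbd z).1 hn.le, div_le_div_of_nonneg_right (hbd z).2 hn.le⟩
  obtain ⟨i, hi⟩ := hcap x
  set S := ∑ j, h ⟨j, x.1 j⟩
  have hS_nonneg : 0 ≤ S := Finset.sum_nonneg fun j _ => (hbd _).1
  have hS_le : S ≤ (n + 1) * f x := by
    simpa using Finset.sum_le_card_nsmul Finset.univ _ _ fun j _ => hle j x
  have hS_gt : f x - ε < S :=
    hi.trans_le (Finset.single_le_sum (f := fun j => h ⟨j, x.1 j⟩) (fun j _ => (hbd _).1)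
      (Finset.mem_univ i))
  have hLg : inducedL X (((n : ℝ) + 1)⁻¹ • h) x = S / (n + 1) := by
    simp [S, inducedL_apply, inv_mul_eq_div, Finset.sum_div]
  rw [hLg]
  refine ⟨div_nonneg hS_nonneg hn.le, (div_le_iff₀ hn).2 (by linarith), ?_⟩
  calc f x - S / (n + 1) = (n * f x + (f x - S)) / (n + 1) := by field_simp; ring
    _ ≤ (n * M + ε) / (n + 1) := by gcongr <;> linarith [hfM x]
    _ ≤ n / (n + 1) * M + ε := by
      rw [add_div, div_mul_eq_mul_div]
      gcongr
      exact div_le_self hε.le (by linarith)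

theorem exists_inducedL_approx (hcover : ⋃ i, A i = univ)
    (hfiber : ∀ i, ∀ x ∈ A i, ∀ x' : X, x'.1 i = x.1 i → x' = x) (hZ' : Z'.Finite)
    (hf' : ∀ x ∈ sternfeldXPrime X A Z', f x = 0) {δ : ℝ} (hδ : 0 < δ) :
    ∃ g : C((Σ i, Y i), ℝ), (∀ z ∈ Z', g z = 0) ∧
      (∀ x ∈ sternfeldXPrime X A Z', f x - inducedL X g x = 0) ∧
      ‖g‖ ≤ ‖f‖ / (n + 1) ∧ ‖f - inducedL X g‖ ≤ n / (n + 1) * ‖f‖ + δ := by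
  obtain ⟨g₁, hg₁, hg₁Z, hLg₁⟩ := exists_inducedL_approx_of_nonneg (f := f ⊔ 0)
    hcover hfiber hZ' le_sup_right (fun x => max_le (f.apply_le_norm x) (norm_nonneg f))
    (norm_nonneg f) (fun x hx => by simp [hf' x hx]) hδ
  obtain ⟨g₂, hg₂, hg₂Z, hLg₂⟩ := exists_inducedL_approx_of_nonneg (f := -f ⊔ 0)
    hcover hfiber hZ' le_sup_right
    (fun x => max_le (neg_le.1 (f.neg_norm_le_apply x)) (norm_nonneg f)) (norm_nonneg f) (fun x hx => by simp [hf' x hx]) hδ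
  have hsplit : ∀ x, f x - inducedL X (g₁ - g₂) x =
      ((f ⊔ 0) x - inducedL X g₁ x) - ((-f ⊔ 0) x - inducedL X g₂ x) := fun x => by
    rw [inducedL_sub, ← max_zero_sub_max_neg_zero_eq_self (f x)]
    simp only [ContinuousMap.sub_apply, ContinuousMap.sup_apply, ContinuousMap.neg_apply,
      ContinuousMap.zero_apply]
    ring
  refine ⟨g₁ - g₂, fun z hz => by simp [hg₁Z z hz, hg₂Z z hz], fun x hx => ?_, ?_, ?_⟩
  · have h₁ := hLg₁ x
    have h₂ := hLg₂ x
    rw [hsplit]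
    simp only [ContinuousMap.sup_apply, ContinuousMap.neg_apply, ContinuousMap.zero_apply,
      hf' x hx, neg_zero, max_self] at h₁ h₂ ⊢
    linarith
  · refine (ContinuousMap.norm_le _ (by positivity)).2 fun z => ?_
    exact abs_sub_le_of_nonneg_of_le (hg₁ z).1 (hg₁ z).2 (hg₂ z).1 (hg₂ z).2
  · refine (ContinuousMap.norm_le _ (by positivity)).2 fun x => ?_
    rw [Real.norm_eq_abs, ContinuousMap.sub_apply, hsplit]
    exact abs_sub_le_of_nonneg_of_le (sub_nonneg.2 (hLg₁ x).2.1) (hLg₁ x).2.2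
      (sub_nonneg.2 (hLg₂ x).2.1) (hLg₂ x).2.2

end Sternfeld

theorem statement5_general {n : ℕ} (hn : 1 ≤ n) {Y : Fin (n + 1) → Type*}
    [∀ i, TopologicalSpace (Y i)] [∀ i, CompactSpace (Y i)]
    [∀ i, TopologicalSpace.MetrizableSpace (Y i)]
    (X : Set (Π i, Y i)) [CompactSpace X]
    (A : Fin (n + 1) → Set X)
    (hcover : ⋃ i, A i = Set.univ)
    (hfiber : ∀ i, ∀ x ∈ A i, ∀ x' : X, (x' : Π j, Y j) i = (x : Π j, Y j) i → x' = x)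
    (Z' : Set (Σ i, Y i)) (hZ' : Z'.Finite) :
    ∀ (f : C(X, ℝ)), (∀ x ∈ sternfeldXPrime X A Z', f x = 0) →
      ∀ c : ℝ, ‖f‖ < c →
        ∃ g : C((Σ i, Y i), ℝ),
          (∀ z ∈ Z', g z = 0) ∧
          (∀ x ∈ sternfeldXPrime X A Z', f x - inducedL X g x = 0) ∧
          ‖g‖ ≤ ‖f‖ / (n + 1) ∧ ‖f - inducedL X g‖ < ((n : ℝ) / (n + 1)) * c := by
  intro f hf' c hfc
  have hn' : (0 : ℝ) < n / (n + 1) := by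
    have : (0 : ℝ) < n := by exact_mod_cast hn
    positivity
  obtain ⟨g, hgZ, hgX, hg, hfg⟩ := Sternfeld.exists_inducedL_approx hcover hfiber hZ' hf'
    (mul_pos hn' (half_pos (sub_pos.2 hfc)))
  refine ⟨g, hgZ, hgX, hg, hfg.trans_lt ?_⟩
  linarith [mul_lt_mul_of_pos_left hfc hn']

/-- The refined approximation step for Sternfeld-type embeddings: if `Z' ⊆ Z` is finite and
`X' = {x ∈ X : x ∈ Aᵢ and pᵢ(x) ∈ Z' ∩ Yᵢ for some i}`, then for every continuous
`f : X → ℝ` vanishing on `X'` and every `c` with `‖f‖ < c` there is a continuous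
`g : Z → ℝ` vanishing on `Z'` such that `f - L g` vanishes on `X'`, `‖g‖ ≤ ‖f‖/(n+1)`
and `‖f - L g‖ < (n/(n+1))·c`. -/
theorem statement5 {n : ℕ} (hn : 1 ≤ n) {Y : Fin (n + 1) → Type*}
    [∀ i, TopologicalSpace (Y i)] [∀ i, CompactSpace (Y i)]
    [∀ i, TopologicalSpace.MetrizableSpace (Y i)]
    (X : Set (Π i, Y i)) [CompactSpace X]
    (A : Fin (n + 1) → Set X) (hA : ∀ i, ZeroDimSubset (A i))
    (hcover : ⋃ i, A i = Set.univ)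
    (hfiber : ∀ i, ∀ x ∈ A i, ∀ x' : X, (x' : Π j, Y j) i = (x : Π j, Y j) i → x' = x)
    (Z' : Set (Σ i, Y i)) (hZ' : Z'.Finite) :
    ∀ (f : C(X, ℝ)), (∀ x ∈ sternfeldXPrime X A Z', f x = 0) →
      ∀ c : ℝ, ‖f‖ < c →
        ∃ g : C((Σ i, Y i), ℝ),
          (∀ z ∈ Z', g z = 0) ∧
          (∀ x ∈ sternfeldXPrime X A Z', f x - inducedL X g x = 0) ∧
          ‖g‖ ≤ ‖f‖ / (n + 1) ∧ ‖f - inducedL X g‖ < ((n : ℝ) / (n + 1)) * c :=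
  statement5_general hn X A hcover hfiber Z' hZ'
end

section
/- Let n ≥ 1 and let X ⊆ Y_1 × ⋯ × Y_{n+1} be a Sternfeld-type embedding of a compact metrizable space X with respect to a decomposition X = A_1 ∪ ⋯ ∪ A_{n+1} into zero-dimensional subsets, with induced transformation L. Let Z' be a finite subset of Z and set X' = { x ∈ X : x ∈ A_i and p_i(x) ∈ Z' ∩ Y_i for some i }. Then X' is finite, and for every continuous f : X → ℝ that vanishes at every point of X' there exists a continuous g : Z → ℝ that vanishes at every point of Z' and satisfies L(g) = f. -/
open Topology

/-!
Sternfeld's iteration. For `f` vanishing on `X'` put `M = ‖f‖` and `c = M / (3 (n + 1))`. A point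
`x` with `f x ≥ 2M/3` lies in some `Aᵢ`, where `pᵢ⁻¹ (pᵢ x) = {x}`; by compactness of `X` a
neighbourhood of `⟨i, pᵢ x⟩` in `Z` meets only coordinates of points where `f > M/3`, and it can
be chosen to avoid the closed set `Z'` because `f x ≠ 0`. Compactness of `{f ≥ 2M/3}` and
Urysohn's lemma then give `g⁺ : Z → [0, c]` vanishing on `Z'` and at all coordinates of points
with `f ≤ M/3`, and equal to `c` at some coordinate of every point with `f ≥ 2M/3`. With `g⁻`
built in the same way from `-f`, `g = g⁺ - g⁻` satisfies `‖g‖ ≤ ‖f‖`,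
`‖f - L g‖ ≤ (1 - 1/(3 (n + 1))) ‖f‖`, and `f - L g` again vanishes on `X'`. The corrections
obtained by iterating form a geometric series whose sum solves `L g = f`.
-/

open Filter Set

theorem AddMonoidHom.exists_mem_eq_of_approx {E F : Type*} [NormedAddCommGroup E]
    [CompleteSpace E] [NormedAddCommGroup F] (T : E →+ F) (hT : Continuous T)
    {G : AddSubmonoid E} (hG : IsClosed (G : Set E)) {S : Set F} {C r : ℝ} (hC : 0 ≤ C)
    (hr₀ : 0 ≤ r) (hr₁ : r < 1)
    (happrox : ∀ f ∈ S, ∃ g ∈ G, ‖g‖ ≤ C * ‖f‖ ∧ f - T g ∈ S ∧ ‖f - T g‖ ≤ r * ‖f‖)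
    {f : F} (hf : f ∈ S) : ∃ g ∈ G, T g = f := by
  choose! φ hφG hφ_norm hφS hφ_approx using happrox
  set e : ℕ → F := fun k => (fun h => h - T (φ h))^[k] f
  have he_succ (k : ℕ) : e (k + 1) = e k - T (φ (e k)) :=
    Function.iterate_succ_apply' _ _ _
  have he_mem (k : ℕ) : e k ∈ S := by
    induction k with
    | zero => exact hf
    | succ k ih => rw [he_succ]; exact hφS _ ih
  have he_norm (k : ℕ) : ‖e k‖ ≤ r ^ k * ‖f‖ := by
    induction k with
    | zero => simp [e]
    | succ k ih =>
      calc ‖e (k + 1)‖ ≤ r * ‖e k‖ := he_succ k ▸ hφ_approx _ (he_mem k)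
        _ ≤ r * (r ^ k * ‖f‖) := by gcongr
        _ = r ^ (k + 1) * ‖f‖ := by ring
  have hsum : Summable fun k => φ (e k) :=
    .of_norm_bounded ((summable_geometric_of_lt_one hr₀ hr₁).mul_left (C * ‖f‖)) fun k =>
      calc ‖φ (e k)‖ ≤ C * ‖e k‖ := hφ_norm _ (he_mem k)
        _ ≤ C * (r ^ k * ‖f‖) := by gcongr; exact he_norm k
        _ = C * ‖f‖ * r ^ k := by ring
  have hpartial (N : ℕ) : T (∑ k ∈ Finset.range N, φ (e k)) = f - e N := by
    rw [map_sum, show f - e N = e 0 - e N from rfl, ← Finset.sum_range_sub']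
    exact Finset.sum_congr rfl fun k _ => by rw [he_succ]; abel
  have he_tendsto : Tendsto e atTop (𝓝 0) :=
    squeeze_zero_norm he_norm <| by
      simpa using (tendsto_pow_atTop_nhds_zero_of_lt_one hr₀ hr₁).mul_const ‖f‖
  refine ⟨∑' k, φ (e k), hG.mem_of_tendsto hsum.hasSum.tendsto_sum_nat
    (Eventually.of_forall fun N => sum_mem fun k _ => hφG _ (he_mem k)), ?_⟩
  refine tendsto_nhds_unique ((hT.tendsto _).comp hsum.hasSum.tendsto_sum_nat) ?_
  simpa [Function.comp_def, hpartial] using he_tendsto.const_sub f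

/-- The pointwise error of one step, with `t = f x`, `P = L g⁺ x` and `Q = L g⁻ x`. -/
theorem abs_sub_sub_le_of_correction {t P Q M c : ℝ} (ht : |t| ≤ M) (hcM : c ≤ M / 3)
    (hP : P ∈ Icc 0 (M / 3)) (hQ : Q ∈ Icc 0 (M / 3))
    (hP₀ : t ≤ M / 3 → P = 0) (hQ₀ : -t ≤ M / 3 → Q = 0)
    (hP₁ : 2 * M / 3 ≤ t → c ≤ P) (hQ₁ : 2 * M / 3 ≤ -t → c ≤ Q) :
    |t - (P - Q)| ≤ M - c := by
  obtain ⟨hP_nonneg, hP_le⟩ := hP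
  obtain ⟨hQ_nonneg, hQ_le⟩ := hQ
  rw [abs_le] at ht ⊢
  rcases le_or_gt t (M / 3) with h₁ | h₁
  · rw [hP₀ h₁]
    rcases le_or_gt (-t) (M / 3) with h₂ | h₂
    · rw [hQ₀ h₂]
      constructor <;> linarith
    rcases le_or_gt (2 * M / 3) (-t) with h₃ | h₃
    · have := hQ₁ h₃
      constructor <;> linarith
    · constructor <;> linarith
  · rw [hQ₀ (by linarith)]
    rcases le_or_gt (2 * M / 3) t with h₃ | h₃
    · have := hP₁ h₃
      constructor <;> linarith
    · constructor <;> linarith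

theorem IsCompact.exists_isClosed_subset_forall_exists_mem {X Z ι : Type*} [TopologicalSpace X]
    [TopologicalSpace Z] [RegularSpace Z] {K : Set X} (hK : IsCompact K) {O : Set Z}
    (hO : IsOpen O) {q : ι → X → Z} (hq : ∀ i, Continuous (q i))
    (hKO : ∀ x ∈ K, ∃ i, q i x ∈ O) : ∃ C ⊆ O, IsClosed C ∧ ∀ x ∈ K, ∃ i, q i x ∈ C := by
  refine hK.induction_on (p := fun s => ∃ C ⊆ O, IsClosed C ∧ ∀ x ∈ s, ∃ i, q i x ∈ C)
    ⟨∅, empty_subset O, isClosed_empty, fun _ h => h.elim⟩ ?_ ?_ ?_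
  · rintro s t hst ⟨C, hCO, hC, ht⟩
    exact ⟨C, hCO, hC, fun x hx => ht x (hst hx)⟩
  · rintro s t ⟨C, hCO, hC, hs⟩ ⟨D, hDO, hD, ht⟩
    refine ⟨C ∪ D, union_subset hCO hDO, hC.union hD, fun x hx => ?_⟩
    rcases hx with hx | hx
    · exact (hs x hx).imp fun _ => Or.inl
    · exact (ht x hx).imp fun _ => Or.inr
  · intro x hx
    obtain ⟨i, hi⟩ := hKO x hx
    obtain ⟨C, hC, hC_closed, hCO⟩ := exists_mem_nhds_isClosed_subset (hO.mem_nhds hi)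
    exact ⟨q i ⁻¹' C, nhdsWithin_le_nhds ((hq i).continuousAt hC), C, hCO, hC_closed,
      fun y hy => ⟨i, hy⟩⟩

section Coordinates

variable {ι : Type*} {Y : ι → Type*} [∀ i, TopologicalSpace (Y i)] (X : Set (Π i, Y i))

/-- `⋃ i, pᵢ '' s`, as a subset of `Z = Σ i, Y i`. -/
def coordImage (s : Set X) : Set (Σ i, Y i) := {z | ∃ x ∈ s, x.1 z.1 = z.2}

theorem IsCompact.isClosed_coordImage [∀ i, T2Space (Y i)] {s : Set X} (hs : IsCompact s) :
    IsClosed (coordImage X s) := by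
  refine isClosed_sigma_iff.mpr fun i => ?_
  have : Sigma.mk i ⁻¹' coordImage X s = (fun x : X => x.1 i) '' s := by
    ext; simp [coordImage]
  rw [this]
  exact (hs.image ((continuous_apply i).comp continuous_subtype_val)).isClosed

section Induced

variable [Fintype ι]

theorem inducedL_apply (g : C((Σ i, Y i), ℝ)) (x : X) :
    inducedL X g x = ∑ i, g ⟨i, x.1 i⟩ :=
  rfl

theorem inducedL_mem_Icc {g : C((Σ i, Y i), ℝ)} {c : ℝ} (hg : ∀ z, g z ∈ Icc 0 c) (x : X) :
    inducedL X g x ∈ Icc 0 (Fintype.card ι * c) := by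
  refine ⟨Finset.sum_nonneg fun i _ => (hg _).1, ?_⟩
  simpa [inducedL_apply] using
    Finset.sum_le_card_nsmul Finset.univ _ c fun i _ => (hg ⟨i, x.1 i⟩).2

noncomputable def inducedLHom : C((Σ i, Y i), ℝ) →+ C(X, ℝ) where
  toFun := inducedL X
  map_zero' := by ext; simp [inducedL_apply]
  map_add' g h := by ext; simp [inducedL_apply, Finset.sum_add_distrib]

@[simp]
theorem coe_inducedLHom : ⇑(inducedLHom X) = inducedL X :=
  rfl

variable [∀ i, CompactSpace (Y i)] [CompactSpace X]

theorem norm_inducedL_le (g : C((Σ i, Y i), ℝ)) : ‖inducedL X g‖ ≤ Fintype.card ι * ‖g‖ :=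
  (ContinuousMap.norm_le _ (by positivity)).mpr fun x => (norm_sum_le _ _).trans <| by
    simpa using Finset.sum_le_card_nsmul Finset.univ _ _ fun i _ => g.norm_coe_le_norm ⟨i, x.1 i⟩

theorem continuous_inducedLHom : Continuous (inducedLHom X) :=
  AddMonoidHomClass.continuous_of_bound _ _ (norm_inducedL_le X)

end Induced

variable [∀ i, CompactSpace (Y i)] [∀ i, T2Space (Y i)] [CompactSpace X] {A : ι → Set X}
  (hcover : ⋃ i, A i = univ) (hfiber : ∀ i, ∀ x ∈ A i, ∀ x' : X, x'.1 i = x.1 i → x' = x)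
  {Z' : Set (Σ i, Y i)} (hZ' : IsClosed Z') {f : C(X, ℝ)}
  (hf : ∀ i, ∀ x ∈ A i, (⟨i, x.1 i⟩ : Σ j, Y j) ∈ Z' → f x = 0)
include hcover hfiber hZ' hf

theorem exists_coordinate_bump [Finite ι] {a b : ℝ} (hb : 0 < b) (hab : a < b) :
    ∃ u : C((Σ i, Y i), ℝ), (∀ z, u z ∈ Icc 0 1) ∧ (∀ z ∈ Z', u z = 0) ∧
      (∀ x : X, f x ≤ a → ∀ i, u ⟨i, x.1 i⟩ = 0) ∧
      ∀ x : X, b ≤ f x → ∃ i, u ⟨i, x.1 i⟩ = 1 := by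
  set B := coordImage X {x | f x ≤ a} ∪ Z'
  have hB : IsClosed B :=
    ((isClosed_le f.continuous continuous_const).isCompact.isClosed_coordImage X).union hZ'
  have hlarge : ∀ x ∈ {x : X | b ≤ f x}, ∃ i, (⟨i, x.1 i⟩ : Σ j, Y j) ∈ Bᶜ := by
    intro x hx
    obtain ⟨i, hi⟩ := mem_iUnion.mp (hcover ▸ mem_univ x)
    refine ⟨i, ?_⟩
    rintro (⟨x', hx', hx'i⟩ | hZ)
    · rw [hfiber i x hi x' hx'i] at hx'
      exact (hx'.trans_lt hab).not_ge hx
    · exact (hb.trans_le hx).ne' (hf i x hi hZ)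
  obtain ⟨C, hCB, hC, hCx⟩ := (isClosed_le continuous_const f.continuous).isCompact
    |>.exists_isClosed_subset_forall_exists_mem hB.isOpen_compl
      (fun i => continuous_sigmaMk.comp ((continuous_apply i).comp continuous_subtype_val)) hlarge
  obtain ⟨u, hu0, hu1, hu⟩ :=
    exists_continuous_zero_one_of_isClosed hB hC (subset_compl_iff_disjoint_left.mp hCB)
  exact ⟨u, hu, fun z hz => hu0 (Or.inr hz), fun x hx i => hu0 (Or.inl ⟨x, hx, rfl⟩),
    fun x hx => (hCx x hx).imp fun i hi => hu1 hi⟩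

variable [Fintype ι]

theorem exists_nonneg_inducedL_ge {a b c : ℝ} (hb : 0 < b) (hab : a < b) (hc : 0 ≤ c) :
    ∃ g : C((Σ i, Y i), ℝ), (∀ z, g z ∈ Icc 0 c) ∧ (∀ z ∈ Z', g z = 0) ∧
      (∀ x : X, f x ≤ a → inducedL X g x = 0) ∧ ∀ x : X, b ≤ f x → c ≤ inducedL X g x := by
  obtain ⟨u, hu, huZ, hu_small, hu_large⟩ :=
    exists_coordinate_bump X hcover hfiber hZ' hf hb hab
  have hcu (z) : (c • u) z ∈ Icc 0 c :=
    ⟨mul_nonneg hc (hu z).1, mul_le_of_le_one_right hc (hu z).2⟩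
  refine ⟨c • u, hcu, fun z hz => ?_, fun x hx => ?_, fun x hx => ?_⟩
  · simp [huZ z hz]
  · simp [inducedL_apply, hu_small x hx]
  · obtain ⟨i, hi⟩ := hu_large x hx
    calc c = (c • u) ⟨i, x.1 i⟩ := by simp [hi]
      _ ≤ inducedL X (c • u) x :=
        Finset.single_le_sum (fun j _ => (hcu ⟨j, x.1 j⟩).1) (Finset.mem_univ i)

theorem exists_approx_inducedL [Nonempty ι] :
    ∃ g : C((Σ i, Y i), ℝ), (∀ z ∈ Z', g z = 0) ∧ ‖g‖ ≤ ‖f‖ ∧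
      (∀ x, f x = 0 → inducedL X g x = 0) ∧
      ‖f - inducedL X g‖ ≤ (1 - 1 / (3 * Fintype.card ι)) * ‖f‖ := by
  rcases (norm_nonneg f).eq_or_lt with hM | hM
  · obtain rfl : f = 0 := norm_eq_zero.mp hM.symm
    have hL : inducedL X 0 = 0 := by ext; simp [inducedL_apply]
    exact ⟨0, by simp, by simp, by simp [hL], by simp [hL]⟩
  set M := ‖f‖
  set N : ℝ := (Fintype.card ι : ℝ)
  set c := M / (3 * N)
  have hN : 1 ≤ N := Nat.one_le_cast.mpr Fintype.card_pos
  have hNc : N * c = M / 3 := by simp only [c]; field_simp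
  have hcM : c ≤ M / 3 := by nlinarith
  obtain ⟨gp, hgp, hgpZ, hgp_small, hgp_large⟩ := exists_nonneg_inducedL_ge X hcover hfiber hZ' hf
    (a := M / 3) (b := 2 * M / 3) (by positivity) (by linarith) (by positivity : 0 ≤ c)
  obtain ⟨gm, hgm, hgmZ, hgm_small, hgm_large⟩ := exists_nonneg_inducedL_ge X hcover hfiber hZ'
    (f := -f) (fun i x hx hz => by simp [hf i x hx hz])
    (a := M / 3) (b := 2 * M / 3) (by positivity) (by linarith) (by positivity : 0 ≤ c)
  have hL (x : X) : inducedL X (gp - gm) x = inducedL X gp x - inducedL X gm x := by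
    simp [inducedL_apply, Finset.sum_sub_distrib]
  have hpt (x : X) : |f x - inducedL X (gp - gm) x| ≤ M - c := by
    rw [hL]
    exact abs_sub_sub_le_of_correction (by simpa using f.norm_coe_le_norm x) hcM
      (hNc ▸ inducedL_mem_Icc X hgp x) (hNc ▸ inducedL_mem_Icc X hgm x)
      (hgp_small x) (hgm_small x) (hgp_large x) (hgm_large x)
  refine ⟨gp - gm, fun z hz => by simp [hgpZ z hz, hgmZ z hz], ?_, fun x hx => ?_, ?_⟩
  · refine (ContinuousMap.norm_le _ hM.le).mpr fun z => ?_
    rw [ContinuousMap.sub_apply, Real.norm_eq_abs, abs_sub_le_iff]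
    constructor <;> linarith [(hgp z).1, (hgp z).2, (hgm z).1, (hgm z).2]
  · rw [hL, hgp_small x (by linarith), hgm_small x (by simp [hx]; positivity), sub_zero]
  · rw [show (1 - 1 / (3 * N)) * M = M - c by simp only [c]; ring]
    refine (ContinuousMap.norm_le _ (by linarith)).mpr fun x => ?_
    rw [ContinuousMap.sub_apply, Real.norm_eq_abs]
    exact hpt x

end Coordinates

theorem sternfeldXPrime_finite {n : ℕ} {Y : Fin (n + 1) → Type*} [∀ i, TopologicalSpace (Y i)]
    (X : Set (Π i, Y i)) {A : Fin (n + 1) → Set X}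
    (hfiber : ∀ i, ∀ x ∈ A i, ∀ x' : X, x'.1 i = x.1 i → x' = x)
    {Z' : Set (Σ i, Y i)} (hZ' : Z'.Finite) : (sternfeldXPrime X A Z').Finite := by
  have hsub : sternfeldXPrime X A Z' ⊆ ⋃ z ∈ Z', {x : X | x ∈ A z.1 ∧ x.1 z.1 = z.2} := by
    rintro x ⟨i, hx, hz⟩
    exact mem_biUnion hz ⟨hx, rfl⟩
  refine (hZ'.biUnion fun z _ => Set.Subsingleton.finite ?_).subset hsub
  rintro x ⟨hx, hxz⟩ x' ⟨-, hx'z⟩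
  exact (hfiber z.1 x hx x' (hx'z.trans hxz.symm)).symm

theorem statement6_general {n : ℕ} {Y : Fin (n + 1) → Type*}
    [∀ i, TopologicalSpace (Y i)] [∀ i, CompactSpace (Y i)]
    [∀ i, TopologicalSpace.MetrizableSpace (Y i)]
    (X : Set (Π i, Y i)) [CompactSpace X]
    (A : Fin (n + 1) → Set X)
    (hcover : ⋃ i, A i = Set.univ)
    (hfiber : ∀ i, ∀ x ∈ A i, ∀ x' : X, (x' : Π j, Y j) i = (x : Π j, Y j) i → x' = x)
    (Z' : Set (Σ i, Y i)) (hZ' : Z'.Finite) :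
    (sternfeldXPrime X A Z').Finite ∧
    ∀ (f : C(X, ℝ)), (∀ x ∈ sternfeldXPrime X A Z', f x = 0) →
      ∃ g : C((Σ i, Y i), ℝ), (∀ z ∈ Z', g z = 0) ∧ inducedL X g = f := by
  refine ⟨sternfeldXPrime_finite X hfiber hZ', fun f hf => ?_⟩
  set S := {f : C(X, ℝ) | ∀ x ∈ sternfeldXPrime X A Z', f x = 0}
  set G := (ContinuousMap.idealOfSet ℝ Z'ᶜ).toAddSubmonoid
  set r := 1 - 1 / (3 * (Fintype.card (Fin (n + 1)) : ℝ))
  have hr : 0 ≤ r ∧ r < 1 := by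
    have : (1 : ℝ) ≤ Fintype.card (Fin (n + 1)) := by simp
    constructor
    · rw [sub_nonneg, div_le_one (by positivity)]; linarith
    · simp only [r, sub_lt_self_iff]; positivity
  have happrox (f) (hf : f ∈ S) : ∃ g ∈ G, ‖g‖ ≤ 1 * ‖f‖ ∧ f - inducedLHom X g ∈ S ∧
      ‖f - inducedLHom X g‖ ≤ r * ‖f‖ := by
    obtain ⟨g, hgZ, hg_norm, hg_zero, hg_approx⟩ :=
      exists_approx_inducedL X hcover hfiber hZ'.isClosed (fun i x hx hz => hf x ⟨i, hx, hz⟩)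
    refine ⟨g, ContinuousMap.mem_idealOfSet.mpr fun z hz => hgZ z (by simpa using hz),
      by simpa using hg_norm, fun x hx => ?_, by simpa only [coe_inducedLHom] using hg_approx⟩
    simp [hf x hx, hg_zero x (hf x hx)]
  obtain ⟨g, hg, hgf⟩ := (inducedLHom X).exists_mem_eq_of_approx (continuous_inducedLHom X)
    (ContinuousMap.idealOfSet_closed ℝ Z'ᶜ) zero_le_one hr.1 hr.2 happrox hf
  exact ⟨g, fun z hz => ContinuousMap.mem_idealOfSet.mp hg (by simpa using hz), hgf⟩

/-- Key step in the proof of openness for Sternfeld-type embeddings: if `Z' ⊆ Z` is finite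
and `X' = {x ∈ X : x ∈ Aᵢ and pᵢ(x) ∈ Z' ∩ Yᵢ for some i}`, then `X'` is finite and every
continuous `f : X → ℝ` vanishing on `X'` equals `L g` for some continuous `g : Z → ℝ`
vanishing on `Z'`. -/
theorem statement6 {n : ℕ} (hn : 1 ≤ n) {Y : Fin (n + 1) → Type*}
    [∀ i, TopologicalSpace (Y i)] [∀ i, CompactSpace (Y i)]
    [∀ i, TopologicalSpace.MetrizableSpace (Y i)]
    (X : Set (Π i, Y i)) [CompactSpace X]
    (A : Fin (n + 1) → Set X) (hA : ∀ i, ZeroDimSubset (A i))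
    (hcover : ⋃ i, A i = Set.univ)
    (hfiber : ∀ i, ∀ x ∈ A i, ∀ x' : X, (x' : Π j, Y j) i = (x : Π j, Y j) i → x' = x)
    (Z' : Set (Σ i, Y i)) (hZ' : Z'.Finite) :
    (sternfeldXPrime X A Z').Finite ∧
    ∀ (f : C(X, ℝ)), (∀ x ∈ sternfeldXPrime X A Z', f x = 0) →
      ∃ g : C((Σ i, Y i), ℝ), (∀ z ∈ Z', g z = 0) ∧ inducedL X g = f :=
  statement6_general X A hcover hfiber Z' hZ'
end

section
/- Let n ≥ 1 and let X ⊆ [0,1]^{2n+1} be a Kolmogorov-type embedding of a compact metric space X with respect to a Kolmogorov family of covers (F^m)_{m∈ℕ}, with induced transformation L. Then for every continuous f : X → ℝ and every real c with ‖f‖ < c, there exists a continuous g : Z → ℝ such that ‖g‖ ≤ ‖f‖/(2n+1) (in particular ‖g‖ < c/(2n+1)) and ‖f − L(g)‖ < (2n/(2n+1))·c, where ‖·‖ denotes the sup-norm. -/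
open Topology

/-- The embedding `X ⊆ [0,1]^N` separates the cover `Fm = Fm 1 ∪ ⋯ ∪ Fm N` if, for each `i`,
the images under the `i`-th coordinate projection of distinct members of `Fm i` are
pairwise disjoint. -/
def KolSeparates {N : ℕ} (X : Set (Fin N → unitInterval))
    (Fm : Fin N → Finset (Set X)) : Prop :=
  ∀ i : Fin N, ∀ s ∈ Fm i, ∀ t ∈ Fm i, s ≠ t →
    Disjoint ((fun x : X => (x : Fin N → unitInterval) i) '' s)
      ((fun x : X => (x : Fin N → unitInterval) i) '' t)

/-- A Kolmogorov family of covers of `X ⊆ [0,1]^N` (for dimension parameter `n`):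
a sequence of finite covers `F m = F m 1 ∪ ⋯ ∪ F m N` of `X` by closed sets such that each
point belongs to members of at least `n + 1` of the subfamilies `F m i`, each subfamily
consists of pairwise disjoint sets, and the mesh of `F m` tends to `0` as `m → ∞`. -/
def IsKolmogorovFamily {N : ℕ} (X : Set (Fin N → unitInterval)) (n : ℕ)
    (F : ℕ → Fin N → Finset (Set X)) : Prop :=
  (∀ m i, ∀ s ∈ F m i, IsClosed s) ∧
  (∀ (m : ℕ) (x : X), n + 1 ≤ {i : Fin N | ∃ s ∈ F m i, x ∈ s}.ncard) ∧
  (∀ m i, ∀ s ∈ F m i, ∀ t ∈ F m i, s ≠ t → Disjoint s t) ∧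
  (∀ ε : ℝ, 0 < ε → ∃ M : ℕ, ∀ m ≥ M, ∀ i, ∀ s ∈ F m i, Metric.diam s < ε)

/-- The embedding `X ⊆ [0,1]^N` is of Kolmogorov type with respect to the family `F` if for
every `ε > 0` there is `m` such that `F m` has mesh `< ε` and the embedding separates `F m`. -/
def IsKolmogorovTypeEmbedding {N : ℕ} (X : Set (Fin N → unitInterval))
    (F : ℕ → Fin N → Finset (Set X)) : Prop :=
  ∀ ε : ℝ, 0 < ε → ∃ m : ℕ,
    (∀ i, ∀ s ∈ F m i, Metric.diam s < ε) ∧ KolSeparates X (F m)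

/-!
Fix `m` so fine that `f` oscillates by less than `δ` on every member `s` of `F m`, and pick a
value `w s` of `f` on `s`. Since the `i`-th projections of the members of `F m i` are disjoint
closed subsets of `[0,1]`, Tietze's theorem gives `gᵢ : [0,1] → ℝ` equal to `w s / (2n+1)` on the
projection of each `s ∈ F m i`, with `‖gᵢ‖ ≤ ‖f‖/(2n+1)`. At a point `x`, at least `n+1` of the
`2n+1` coordinates `i` are good (`x` lies in a member of `F m i`) and there
`|f x/(2n+1) - gᵢ(xᵢ)| < δ/(2n+1)`; each of the at most `n` bad coordinates contributes at most
`2‖f‖/(2n+1)`.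
-/

open Function in
theorem exists_continuous_eqOn_of_pairwise_disjoint {Y ι : Type*} [TopologicalSpace Y]
    [NormalSpace Y] [Fintype ι] {A : ι → Set Y} (hA : ∀ i, IsClosed (A i))
    (hdisj : Pairwise (Disjoint on A)) {t : Set ℝ} [t.OrdConnected] (ht : t.Nonempty)
    {v : ι → ℝ} (hv : ∀ i, v i ∈ t) :
    ∃ G : C(Y, ℝ), (∀ y, G y ∈ t) ∧ ∀ i, ∀ y ∈ A i, G y = v i := by
  classical
  set h : Y → ℝ := fun y => ∑ i, (A i).indicator (fun _ => v i) y
  have h_eq : ∀ i, ∀ y ∈ A i, h y = v i := by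
    intro i y hy
    show ∑ j, (A j).indicator (fun _ => v j) y = v i
    rw [Finset.sum_eq_single i (fun j _ hji => Set.indicator_of_notMem
      (fun hyj => Set.disjoint_left.1 (hdisj hji) hyj hy) _) (by simp),
      Set.indicator_of_mem hy]
  have h_cont : ContinuousOn h (⋃ i, A i) :=
    (locallyFinite_of_finite A).continuousOn_iUnion hA fun i =>
      continuousOn_const.congr (h_eq i)
  have h_mem : ∀ y : ↥(⋃ i, A i), h y ∈ t := by
    rintro ⟨y, hy⟩
    obtain ⟨i, hi⟩ := Set.mem_iUnion.1 hy
    simpa [h_eq i y hi] using hv i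
  obtain ⟨G, hGt, hGh⟩ := ContinuousMap.exists_restrict_eq_forall_mem_of_closed
    ⟨_, h_cont.domRestrict⟩ h_mem ht (isClosed_iUnion_of_finite hA)
  refine ⟨G, hGt, fun i y hy => ?_⟩
  simpa [h_eq i y hy] using congr($hGh ⟨y, Set.mem_iUnion.2 ⟨i, hy⟩⟩)

theorem KolSeparates.exists_continuous_sigma_eq {N : ℕ} {X : Set (Fin N → unitInterval)}
    [CompactSpace X] {Fm : Fin N → Finset (Set X)} (hclosed : ∀ i, ∀ s ∈ Fm i, IsClosed s)
    (hsep : KolSeparates X Fm) {M : ℝ} (hM : 0 ≤ M) (w : Set X → ℝ)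
    (hw : ∀ i, ∀ s ∈ Fm i, |w s| ≤ M) :
    ∃ g : C((Σ _ : Fin N, unitInterval), ℝ), ‖g‖ ≤ M ∧
      ∀ i, ∀ s ∈ Fm i, ∀ x ∈ s, g ⟨i, (x : Fin N → unitInterval) i⟩ = w s := by
  have hG : ∀ i, ∃ G : C(unitInterval, ℝ), (∀ y, G y ∈ Set.Icc (-M) M) ∧
      ∀ s : Fm i, ∀ y ∈ (fun x : X => (x : Fin N → unitInterval) i) '' (s : Set X),
        G y = w s := by
    intro i
    refine exists_continuous_eqOn_of_pairwise_disjoint (fun s => ?_) (fun s t hst => ?_)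
      ⟨0, by simp [hM]⟩ fun s => abs_le.1 (hw i s s.2)
    · exact ((hclosed i s s.2).isCompact.image
        ((continuous_apply i).comp continuous_subtype_val)).isClosed
    · exact hsep i s s.2 t t.2 (Subtype.coe_injective.ne hst)
  choose G hGM hGw using hG
  refine ⟨⟨fun z => G z.1 z.2, continuous_sigma fun i => (G i).continuous⟩, ?_, ?_⟩
  · exact (ContinuousMap.norm_le _ hM).2 fun z => abs_le.2 (hGM z.1 z.2)
  · intro i s hs x hx
    exact hGw i ⟨s, hs⟩ _ ⟨x, hx, rfl⟩

theorem exists_abs_sub_lt_of_diam_lt {X : Type*} [PseudoMetricSpace X] [CompactSpace X]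
    (f : C(X, ℝ)) {ε δ : ℝ} (hf : ∀ ⦃x y : X⦄, dist x y < ε → dist (f x) (f y) < δ)
    {s : Set X} (hs : Metric.diam s < ε) :
    ∃ w, |w| ≤ ‖f‖ ∧ ∀ x ∈ s, |f x - w| < δ := by
  rcases s.eq_empty_or_nonempty with rfl | ⟨y, hy⟩
  · exact ⟨0, by simp, by simp⟩
  · refine ⟨f y, f.norm_coe_le_norm y, fun x hx => hf ?_⟩
    exact (Metric.dist_le_diam_of_mem Metric.isBounded_of_compactSpace hx hy).trans_lt hs

theorem abs_sum_le_of_card_filter_not_le {ι : Type*} [Fintype ι] (a : ι → ℝ) (p : ι → Prop)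
    [DecidablePred p] {α β : ℝ} {k : ℕ} (hα : 0 ≤ α) (hβ : 0 ≤ β)
    (hgood : ∀ i, p i → |a i| ≤ α) (hbad : ∀ i, ¬ p i → |a i| ≤ β)
    (hk : (Finset.univ.filter fun i => ¬ p i).card ≤ k) :
    |∑ i, a i| ≤ Fintype.card ι * α + k * β := by
  calc |∑ i, a i| ≤ ∑ i, |a i| := Finset.abs_sum_le_sum_abs _ _
    _ = ∑ i ∈ Finset.univ.filter p, |a i| + ∑ i ∈ Finset.univ.filter (¬ p ·), |a i| :=
        (Finset.sum_filter_add_sum_filter_not _ _ _).symm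
    _ ≤ (Finset.univ.filter p).card * α + (Finset.univ.filter (¬ p ·)).card * β := by
        simp only [← nsmul_eq_mul]
        exact add_le_add
          (Finset.sum_le_card_nsmul _ _ _ fun i hi => hgood i (Finset.mem_filter.1 hi).2)
          (Finset.sum_le_card_nsmul _ _ _ fun i hi => hbad i (Finset.mem_filter.1 hi).2)
    _ ≤ Fintype.card ι * α + k * β := by
        gcongr
        exact Finset.card_filter_le _ _

theorem norm_sub_inducedL_le {N k : ℕ} (hN : 0 < N) {X : Set (Fin N → unitInterval)}
    [CompactSpace X] {Fm : Fin N → Finset (Set X)}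
    (hcover : ∀ x : X, k ≤ {i | ∃ s ∈ Fm i, x ∈ s}.ncard)
    (f : C(X, ℝ)) (g : C((Σ _ : Fin N, unitInterval), ℝ)) (hg : ‖g‖ ≤ ‖f‖ / N) {η : ℝ}
    (hη : 0 ≤ η)
    (hnear : ∀ i, ∀ s ∈ Fm i, ∀ x ∈ s, |f x / N - g ⟨i, (x : Fin N → unitInterval) i⟩| ≤ η) :
    ‖f - inducedL X g‖ ≤ N * η + (N - k : ℕ) * (2 * ‖f‖ / N) := by
  classical
  refine (ContinuousMap.norm_le _ (by positivity)).2 fun x => ?_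
  have h_sum : (f - inducedL X g) x = ∑ i, (f x / N - g ⟨i, (x : Fin N → unitInterval) i⟩) := by
    rw [Finset.sum_sub_distrib, Finset.sum_const, Finset.card_univ, Fintype.card_fin,
      nsmul_eq_mul, mul_div_cancel₀ _ (by positivity)]
    rfl
  rw [Real.norm_eq_abs, h_sum]
  refine (abs_sum_le_of_card_filter_not_le _ (fun i => ∃ s ∈ Fm i, x ∈ s) hη
    (β := 2 * ‖f‖ / N) (k := N - k) (by positivity) ?_ ?_ ?_).trans_eq (by simp)
  · rintro i ⟨s, hs, hx⟩
    exact hnear i s hs x hx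
  · intro i _
    calc |f x / N - g ⟨i, (x : Fin N → unitInterval) i⟩|
        ≤ |f x / N| + |g ⟨i, (x : Fin N → unitInterval) i⟩| := abs_sub _ _
      _ ≤ ‖f‖ / N + ‖f‖ / N := by
        gcongr
        · rw [abs_div, Nat.abs_cast]
          gcongr
          exact f.norm_coe_le_norm x
        · exact (g.norm_coe_le_norm _).trans hg
      _ = 2 * ‖f‖ / N := by ring
  · have h_good : k ≤ (Finset.univ.filter fun i => ∃ s ∈ Fm i, x ∈ s).card := by
      simpa [← Set.ncard_coe_finset] using hcover x
    have h_split := Finset.card_filter_add_card_filter_not (s := Finset.univ)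
      (fun i : Fin N => ∃ s ∈ Fm i, x ∈ s)
    rw [Finset.card_univ, Fintype.card_fin] at h_split
    omega

/-- The approximation step for Kolmogorov-type embeddings: for every continuous `f : X → ℝ`
and every `c` with `‖f‖ < c` there is a continuous `g : Z → ℝ` with `‖g‖ ≤ ‖f‖/(2n+1)` and
`‖f - L g‖ < (2n/(2n+1))·c`, where `‖·‖` is the sup-norm. -/
theorem statement8 {n : ℕ} (hn : 1 ≤ n)
    (X : Set (Fin (2 * n + 1) → unitInterval)) [CompactSpace X]
    (F : ℕ → Fin (2 * n + 1) → Finset (Set X))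
    (hF : IsKolmogorovFamily X n F)
    (hemb : IsKolmogorovTypeEmbedding X F) :
    ∀ (f : C(X, ℝ)) (c : ℝ), ‖f‖ < c →
      ∃ g : C((Σ _ : Fin (2 * n + 1), unitInterval), ℝ),
        ‖g‖ ≤ ‖f‖ / (2 * n + 1) ∧
        ‖f - inducedL X g‖ < ((2 * n : ℝ) / (2 * n + 1)) * c := by
  intro f c hfc
  obtain ⟨hclosed, hcover, -, -⟩ := hF
  have hn_pos : (0 : ℝ) < n := by exact_mod_cast hn
  have hN : (0 : ℝ) < 2 * n + 1 := by positivity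
  -- with this δ the final bound δ + 2n‖f‖/(2n+1) equals n(c + ‖f‖)/(2n+1) < 2nc/(2n+1)
  set δ : ℝ := n * (c - ‖f‖) / (2 * n + 1) with hδ_def
  have hδ : 0 < δ := by have := sub_pos.2 hfc; positivity
  obtain ⟨ε, hε, hfε⟩ := Metric.uniformContinuous_iff.1
    (CompactSpace.uniformContinuous_of_continuous f.continuous) δ hδ
  obtain ⟨m, hmesh, hsep⟩ := hemb ε hε
  have hw : ∀ s, (∃ i, s ∈ F m i) → ∃ w, |w| ≤ ‖f‖ ∧ ∀ x ∈ s, |f x - w| < δ :=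
    fun s ⟨i, hs⟩ => exists_abs_sub_lt_of_diam_lt f hfε (hmesh i s hs)
  choose! w hw_norm hw_near using hw
  obtain ⟨g, hg, hgw⟩ := hsep.exists_continuous_sigma_eq (hclosed m)
    (M := ‖f‖ / (2 * n + 1)) (by positivity) (fun s => w s / (2 * n + 1)) fun i s hs => by
      rw [abs_div, abs_of_pos hN]
      gcongr
      exact hw_norm s ⟨i, hs⟩
  refine ⟨g, hg, ?_⟩
  have h_bound := norm_sub_inducedL_le (Nat.succ_pos _) (hcover m) f g (by simpa using hg)
    (η := δ / (2 * n + 1)) (by positivity) fun i s hs x hx => by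
      push_cast
      rw [hgw i s hs x hx, div_sub_div_same, abs_div, abs_of_pos hN]
      gcongr
      exact (hw_near s ⟨i, hs⟩ x hx).le
  refine h_bound.trans_lt ?_
  rw [show 2 * n + 1 - (n + 1) = n by omega]
  push_cast
  rw [hδ_def]
  field_simp
  nlinarith
end

section
/- Let Z and X be compact metric spaces and let L : C(Z,ℝ) → C(X,ℝ) be a linear map satisfying: (i) there exists C > 0 such that for every continuous f : X → ℝ there is a continuous g : Z → ℝ with L(g) = f and ‖g‖ ≤ C·‖f‖ (i.e. L is surjective and open with respect to the sup-norm topologies); (ii) for every finite subset Z' of Z there exists a finite subset X' of X such that every continuous f : X → ℝ vanishing at every point of X' equals L(g) for some continuous g : Z → ℝ vanishing at every point of Z'. Then L is an open map with respect to the topologies of pointwise convergence on C(Z,ℝ) and C(X,ℝ). -/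
open Topology

/-- Abstract openness criterion: a linear `L : C(Z, ℝ) → C(X, ℝ)` which is surjective and
open for the sup-norm topologies (witnessed by a uniform bound `C`), and which lifts every
function vanishing on a suitable finite set `X'` to a function vanishing on a prescribed
finite set `Z'`, is open for the topologies of pointwise convergence. -/
theorem statement10 {Z X : Type*} [MetricSpace Z] [CompactSpace Z]
    [MetricSpace X] [CompactSpace X]
    (L : C(Z, ℝ) →ₗ[ℝ] C(X, ℝ))
    (h1 : ∃ C : ℝ, 0 < C ∧ ∀ f : C(X, ℝ), ∃ g : C(Z, ℝ), L g = f ∧ ‖g‖ ≤ C * ‖f‖)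
    (h2 : ∀ Z' : Set Z, Z'.Finite → ∃ X' : Set X, X'.Finite ∧
      ∀ f : C(X, ℝ), (∀ x ∈ X', f x = 0) →
        ∃ g : C(Z, ℝ), (∀ z ∈ Z', g z = 0) ∧ L g = f) :
    @IsOpenMap _ _ (cpTop Z) (cpTop X) L := by
  obtain ⟨C, hC, hsur⟩ := h1
  letI := cpTop Z
  letI := cpTop X
  intro U hU
  rw [isOpen_iff_mem_nhds]
  rintro f₀ ⟨g₀, hg₀U, rfl⟩
  rw [cpTop, isOpen_induced_iff] at hU
  obtain ⟨V, hV, rfl⟩ := hU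
  rw [isOpen_pi_iff] at hV
  obtain ⟨I, u, hu, hIu⟩ := hV g₀ hg₀U
  have hε : ∀ z ∈ I, ∃ ε > 0, Metric.ball ((g₀ : Z → ℝ) z) ε ⊆ u z := by
    intro z hz
    exact Metric.isOpen_iff.mp (hu z hz).1 _ (hu z hz).2
  choose! εf hεf hball using hε
  set ε : ℝ := (insert (1:ℝ) (I.image εf)).min' (by simp) with hεdef
  have hεpos : 0 < ε := by
    rw [hεdef, Finset.lt_min'_iff]
    intro b hb
    rcases Finset.mem_insert.mp hb with h | h
    · simp [h]
    · obtain ⟨z, hz, rfl⟩ := Finset.mem_image.mp h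
      exact hεf z hz
  have hεle : ∀ z ∈ I, ε ≤ εf z := fun z hz =>
    Finset.min'_le _ _ (Finset.mem_insert.mpr (Or.inr (Finset.mem_image_of_mem _ hz)))
  obtain ⟨X', hX'fin, hlift⟩ := h2 (I : Set Z) (I.finite_toSet)
  set δ : ℝ := ε / (2 * C) with hδdef
  have hδpos : 0 < δ := div_pos hεpos (by linarith)
  rw [cpTop, nhds_induced, Filter.mem_comap]
  refine ⟨(X' : Set X).pi (fun x => Metric.ball ((L g₀ : X → ℝ) x) δ), ?_, ?_⟩
  · exact (isOpen_set_pi hX'fin (fun x _ => Metric.isOpen_ball)).mem_nhds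
      (fun x _ => Metric.mem_ball_self hδpos)
  · rintro f hf
    simp only [Set.mem_preimage, Set.mem_pi] at hf
    set h : C(X, ℝ) := f - L g₀ with hh
    have hval : ∀ x ∈ X', |h x| ≤ δ := by
      intro x hx
      have := hf x hx
      rw [Metric.mem_ball, Real.dist_eq] at this
      simpa [hh] using this.le
    haveI : CompactSpace X' := isCompact_iff_compactSpace.mp hX'fin.isCompact
    obtain ⟨f₁b, hf₁norm, hf₁restrict⟩ :=
      BoundedContinuousFunction.exists_norm_eq_restrict_eq_of_closed
        (BoundedContinuousFunction.mkOfCompact (h.restrict X')) hX'fin.isClosed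
    set f₁ : C(X, ℝ) := f₁b.toContinuousMap with hf₁def
    have hf₁small : ‖f₁‖ ≤ δ := by
      have heq : ‖f₁‖ = ‖BoundedContinuousFunction.mkOfCompact (h.restrict X')‖ := by
        rw [hf₁def, BoundedContinuousFunction.norm_toContinuousMap_eq, hf₁norm]
      rw [heq, BoundedContinuousFunction.norm_le hδpos.le]
      intro x
      simpa [Real.norm_eq_abs] using hval x x.2
    have hf₁eq : ∀ x ∈ X', f₁ x = h x := by
      intro x hx
      have := DFunLike.congr_fun hf₁restrict ⟨x, hx⟩
      simpa [hf₁def] using this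
    obtain ⟨g₁, hg₁L, hg₁norm⟩ := hsur f₁
    have hg₁small : ‖g₁‖ ≤ C * δ := le_trans hg₁norm (by nlinarith)
    obtain ⟨g₂, hg₂zero, hg₂L⟩ := hlift (h - f₁) (by
      intro x hx
      simp [hf₁eq x hx])
    refine ⟨g₀ + g₁ + g₂, ?_, ?_⟩
    · apply hIu
      intro z hz
      apply hball z hz
      have hg₂z := hg₂zero z hz
      have hb : |(g₁ : Z → ℝ) z| ≤ C * δ :=
        le_trans (g₁.norm_coe_le_norm z) hg₁small
      rw [Metric.mem_ball, Real.dist_eq]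
      simp only [ContinuousMap.add_apply]
      rw [hg₂z]
      have hCδ : C * δ < ε := by
        rw [hδdef, mul_div_assoc', div_lt_iff₀ (by linarith)]
        nlinarith
      calc |(g₀ : Z → ℝ) z + g₁ z + 0 - g₀ z| = |(g₁ : Z → ℝ) z| := by ring_nf
        _ < εf z := lt_of_le_of_lt hb (lt_of_lt_of_le hCδ (hεle z hz))
    · show L (g₀ + g₁ + g₂) = f
      rw [map_add, map_add, hg₁L, hg₂L, hh]
      ring
end

section
/- Let Z and X be compact metric spaces and let L : C(Z,ℝ) → C(X,ℝ) be a linear map satisfying: (i) there exists C > 0 such that for every continuous f : X → ℝ there is a continuous g : Z → ℝ with L(g) = f and ‖g‖ ≤ C·‖f‖ (i.e. L is surjective and open with respect to the sup-norm topologies); (ii) for every finite subset Z' of Z there exists a finite subset X' of X such that for every continuous f : X → ℝ vanishing at every point of X' and every δ > 0 there is a continuous g : Z → ℝ vanishing at every point of Z' with ‖f − L(g)‖ < δ. Then L is an open map with respect to the topologies of pointwise convergence on C(Z,ℝ) and C(X,ℝ). -/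
/-!
To hit every `f'` pointwise close to `L g` on a finite set `X'`, split
`f' - L g = h + (f' - L g - h)`, where `h` is a Tietze extension of the small values of
`f' - L g` on `X'` with small sup-norm. The second summand vanishes on `X'`, so by (ii) it is
within `η` of some `L g₁` with `g₁ = 0` on the prescribed finite set `F ⊆ Z`. The remainder
`f' - L g - L g₁` then has sup-norm below `2η`, and (i) lifts it to some `g₂` of sup-norm at
most `2Cη`. Hence `L (g + g₁ + g₂) = f'` while `g + g₁ + g₂` differs from `g` by less than
`ε = 2Cη` on `F`.
-/

open Topology

lemma cpTop_nhds_hasBasis {T : Type*} [TopologicalSpace T] (g : C(T, ℝ)) :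
    (@nhds _ (cpTop T) g).HasBasis (fun p : Set T × ℝ => p.1.Finite ∧ 0 < p.2)
      (fun p => {g' | ∀ t ∈ p.1, |g' t - g t| < p.2}) := by
  rw [cpTop, nhds_induced, ← nhds_translation_sub, nhds_pi, Filter.comap_comap]
  convert ((Metric.nhds_basis_ball (x := (0 : ℝ))).pi_self (ι := T)).comap
    ((· - ⇑g) ∘ fun f : C(T, ℝ) => ⇑f) using 2 with p
  · rfl
  · ext g'
    simp

lemma ContinuousMap.exists_eqOn_norm_lt {X : Type*} [TopologicalSpace X] [CompactSpace X]
    [NormalSpace X] {S : Set X} (hS : IsClosed S) (f : C(X, ℝ)) {η : ℝ} (hη : 0 < η)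
    (hf : ∀ x ∈ S, |f x| < η) : ∃ h : C(X, ℝ), Set.EqOn h f S ∧ ‖h‖ < η := by
  have : CompactSpace S := isCompact_iff_compactSpace.mp hS.isCompact
  obtain ⟨h, hmem, hres⟩ := BoundedContinuousFunction.exists_forall_mem_domRestrict_eq_of_closed
    (BoundedContinuousFunction.mkOfCompact (f.restrict S)) hS (t := Set.Ioo (-η) η)
    (fun x => abs_lt.mp (hf x x.2)) ⟨0, by simp [hη]⟩
  refine ⟨h.toContinuousMap, fun x hx => congrArg (· ⟨x, hx⟩) (congrArg DFunLike.coe hres), ?_⟩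
  rw [ContinuousMap.norm_lt_iff _ hη]
  exact fun x => abs_lt.mpr (hmem x)

section SmallLifts

variable {Z X : Type*} [TopologicalSpace Z] [TopologicalSpace X]

/-- Openness at `0` for the topologies of pointwise convergence, phrased with the basic
neighbourhoods of `cpTop_nhds_hasBasis`. -/
def HasSmallLifts (L : C(Z, ℝ) →ₗ[ℝ] C(X, ℝ)) : Prop :=
  ∀ F : Set Z, F.Finite → ∃ X' : Set X, X'.Finite ∧ ∀ ε > 0, ∃ η > 0, ∀ f : C(X, ℝ),
    (∀ x ∈ X', |f x| < η) → ∃ g : C(Z, ℝ), L g = f ∧ ∀ z ∈ F, |g z| < ε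

theorem HasSmallLifts.isOpenMap_cpTop {L : C(Z, ℝ) →ₗ[ℝ] C(X, ℝ)} (hL : HasSmallLifts L) :
    @IsOpenMap _ _ (cpTop Z) (cpTop X) L := by
  intro U hU
  rw [@isOpen_iff_mem_nhds _ (cpTop X)]
  rintro _ ⟨g, hgU, rfl⟩
  obtain ⟨⟨F, ε⟩, ⟨hF, hε⟩, hFU⟩ :=
    (cpTop_nhds_hasBasis g).mem_iff.mp (@IsOpen.mem_nhds _ (cpTop Z) _ _ hU hgU)
  obtain ⟨X', hX', hX'F⟩ := hL F hF
  obtain ⟨η, hη, hlift⟩ := hX'F ε hε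
  refine (cpTop_nhds_hasBasis (L g)).mem_iff.mpr ⟨(X', η), ⟨hX', hη⟩, fun f' hf' => ?_⟩
  obtain ⟨g', hLg', hg'⟩ := hlift (f' - L g) (by simpa using hf')
  exact ⟨g + g', hFU (by simpa using hg'), by simp [hLg']⟩

theorem hasSmallLifts_of_approx [CompactSpace Z] [CompactSpace X] [NormalSpace X] [T1Space X]
    (L : C(Z, ℝ) →ₗ[ℝ] C(X, ℝ)) {C : ℝ} (hC : 0 < C)
    (hlift : ∀ f : C(X, ℝ), ∃ g : C(Z, ℝ), L g = f ∧ ‖g‖ ≤ C * ‖f‖)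
    (happrox : ∀ Z' : Set Z, Z'.Finite → ∃ X' : Set X, X'.Finite ∧
      ∀ f : C(X, ℝ), (∀ x ∈ X', f x = 0) → ∀ δ : ℝ, 0 < δ →
        ∃ g : C(Z, ℝ), (∀ z ∈ Z', g z = 0) ∧ ‖f - L g‖ < δ) :
    HasSmallLifts L := by
  intro F hF
  obtain ⟨X', hX', happroxF⟩ := happrox F hF
  refine ⟨X', hX', fun ε hε => ?_⟩
  have hη : 0 < ε / (2 * C) := by positivity
  refine ⟨ε / (2 * C), hη, fun f hf => ?_⟩
  obtain ⟨h, hhf, hh⟩ := ContinuousMap.exists_eqOn_norm_lt hX'.isClosed f hη hf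
  obtain ⟨g₁, hg₁F, hg₁⟩ := happroxF (f - h) (fun x hx => by simp [hhf hx]) _ hη
  obtain ⟨g₂, hLg₂, hg₂⟩ := hlift (f - L g₁)
  have hrem : ‖f - L g₁‖ < ε / C :=
    calc ‖f - L g₁‖ = ‖h + (f - h - L g₁)‖ := by congr 1; abel
      _ ≤ ‖h‖ + ‖f - h - L g₁‖ := norm_add_le _ _
      _ < ε / (2 * C) + ε / (2 * C) := add_lt_add hh hg₁
      _ = ε / C := by field_simp; ring
  refine ⟨g₁ + g₂, by simp [hLg₂], fun z hz => ?_⟩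
  calc |(g₁ + g₂) z| = |g₂ z| := by simp [hg₁F z hz]
    _ ≤ ‖g₂‖ := g₂.norm_coe_le_norm z
    _ ≤ C * ‖f - L g₁‖ := hg₂
    _ < C * (ε / C) := by gcongr
    _ = ε := by field_simp

end SmallLifts

/-- Abstract openness criterion, approximate version: a linear `L : C(Z, ℝ) → C(X, ℝ)` which
is surjective and open for the sup-norm topologies (witnessed by a uniform bound `C`), and
such that every function vanishing on a suitable finite set `X'` can be sup-norm
approximated by `L g` with `g` vanishing on a prescribed finite set `Z'`, is open for the
topologies of pointwise convergence. -/
theorem statement11 {Z X : Type*} [MetricSpace Z] [CompactSpace Z]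
    [MetricSpace X] [CompactSpace X]
    (L : C(Z, ℝ) →ₗ[ℝ] C(X, ℝ))
    (h1 : ∃ C : ℝ, 0 < C ∧ ∀ f : C(X, ℝ), ∃ g : C(Z, ℝ), L g = f ∧ ‖g‖ ≤ C * ‖f‖)
    (h2 : ∀ Z' : Set Z, Z'.Finite → ∃ X' : Set X, X'.Finite ∧
      ∀ f : C(X, ℝ), (∀ x ∈ X', f x = 0) → ∀ δ : ℝ, 0 < δ →
        ∃ g : C(Z, ℝ), (∀ z ∈ Z', g z = 0) ∧ ‖f - L g‖ < δ) :
    @IsOpenMap _ _ (cpTop Z) (cpTop X) L := by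
  obtain ⟨C, hC, hlift⟩ := h1
  exact (hasSmallLifts_of_approx L hC hlift h2).isOpenMap_cpTop
end

section
/- Let Y be a compact metrizable space and A a closed subset of Y. Then the restriction map R : C(Y,ℝ) → C(A,ℝ), R(f) = f|_A, is a surjective linear map that is both continuous and open when C(Y,ℝ) and C(A,ℝ) carry the topologies of pointwise convergence. -/
open Topology

/-!
Tietze's theorem extends any `h : C(A, ℝ)` to some `G : C(Y, ℝ)`. Adding a combination of
Urysohn functions that vanish on `A` then also prescribes the values of the extension at finitely
many points outside `A`. Since a basic neighbourhood for pointwise convergence only constrains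
finitely many values, this shows that the image of a neighbourhood of `f` contains a
neighbourhood of `f|_A`.
-/

section

open Set

variable {Y : Type*} [TopologicalSpace Y]

theorem exists_continuousMap_eqOn_zero_eqOn_of_finite [NormalSpace Y] [T1Space Y] {A : Set Y}
    (hA : IsClosed A) {F : Set Y} (hF : F.Finite) (hAF : Disjoint A F) (v : Y → ℝ) :
    ∃ φ : C(Y, ℝ), EqOn φ 0 A ∧ EqOn φ v F := by
  induction F, hF using Set.Finite.induction_on with
  | empty => exact ⟨0, fun _ _ => rfl, eqOn_empty _ _⟩
  | @insert y s hys hs ih =>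
    obtain ⟨φ, hφA, hφs⟩ := ih (hAF.mono_right (subset_insert y s))
    have hy : Disjoint (A ∪ s) {y} := by
      rw [disjoint_singleton_right]
      rintro (hyA | hy)
      · exact hAF.notMem_of_mem_left hyA (mem_insert y s)
      · exact hys hy
    obtain ⟨b, hb0, hb1, -⟩ :=
      exists_continuous_zero_one_of_isClosed (hA.union hs.isClosed) isClosed_singleton hy
    refine ⟨φ + (v y - φ y) • b, fun x hx => ?_, ?_⟩
    · simp [hφA hx, hb0 (mem_union_left s hx)]
    · rintro x (rfl | hx)
      · simp [hb1 rfl]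
      · simp [hφs hx, hb0 (mem_union_right A hx)]

theorem exists_restrict_eq_eqOn_of_finite [NormalSpace Y] [T1Space Y] {A : Set Y}
    (hA : IsClosed A) (h : C(A, ℝ)) (f : C(Y, ℝ)) {F : Set Y} (hF : F.Finite) :
    ∃ g : C(Y, ℝ), g.restrict A = h ∧ EqOn g f (F \ A) := by
  obtain ⟨G, hG⟩ := ContinuousMap.exists_restrict_eq hA h
  obtain ⟨φ, hφA, hφF⟩ := exists_continuousMap_eqOn_zero_eqOn_of_finite hA hF.sdiff
    disjoint_sdiff_right (f - G)
  refine ⟨G + φ, ?_, fun y hy => ?_⟩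
  · ext a
    simp [← hG, hφA a.2]
  · simp [hφF hy]

theorem continuous_restrict_cpTop (A : Set Y) :
    @Continuous _ _ (cpTop Y) (cpTop A) (fun f : C(Y, ℝ) => f.restrict A) :=
  letI := cpTop Y
  continuous_induced_rng.2 <| continuous_pi fun a =>
    (continuous_apply (a : Y)).comp continuous_induced_dom

theorem isOpenMap_restrict_cpTop [NormalSpace Y] [T1Space Y] {A : Set Y} (hA : IsClosed A) :
    @IsOpenMap _ _ (cpTop Y) (cpTop A) (fun f : C(Y, ℝ) => f.restrict A) := by
  let := cpTop Y
  let := cpTop A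
  intro U hU
  obtain ⟨W, hW, rfl⟩ := isOpen_induced_iff.1 hU
  rw [isOpen_iff_forall_mem_open]
  rintro _ ⟨f, hfW, rfl⟩
  obtain ⟨I, u, hu, hIu⟩ := isOpen_pi_iff.1 hW _ hfW
  let J : Set A := Subtype.val ⁻¹' (I : Set Y)
  refine ⟨(fun k : C(A, ℝ) => (k : A → ℝ)) ⁻¹' J.pi (fun a => u a), ?_, ?_,
    fun a ha => (hu a ha).2⟩
  · intro k hk
    obtain ⟨g, rfl, hgf⟩ := exists_restrict_eq_eqOn_of_finite hA k f I.finite_toSet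
    refine ⟨g, hIu fun y hy => ?_, rfl⟩
    by_cases hyA : y ∈ A
    · exact hk ⟨y, hyA⟩ hy
    · change g y ∈ u y
      rw [hgf ⟨hy, hyA⟩]
      exact (hu y hy).2
  · have hJ : J.Finite := I.finite_toSet.preimage Subtype.val_injective.injOn
    exact (isOpen_set_pi hJ fun a ha => (hu a ha).1).preimage continuous_induced_dom

end

theorem statement13_general {Y : Type*} [TopologicalSpace Y]
    [TopologicalSpace.MetrizableSpace Y] (A : Set Y) (hA : IsClosed A) :
    Function.Surjective (fun f : C(Y, ℝ) => f.restrict A) ∧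
    (∀ f g : C(Y, ℝ), (f + g).restrict A = f.restrict A + g.restrict A) ∧
    (∀ (c : ℝ) (f : C(Y, ℝ)), (c • f).restrict A = c • f.restrict A) ∧
    @Continuous _ _ (cpTop Y) (cpTop A) (fun f : C(Y, ℝ) => f.restrict A) ∧
    @IsOpenMap _ _ (cpTop Y) (cpTop A) (fun f : C(Y, ℝ) => f.restrict A) :=
  ⟨ContinuousMap.exists_restrict_eq hA, fun _ _ => rfl, fun _ _ => rfl,
    continuous_restrict_cpTop A, isOpenMap_restrict_cpTop hA⟩

/-- For a compact metrizable space `Y` and a closed subset `A ⊆ Y`, the restriction map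
`R : C(Y, ℝ) → C(A, ℝ)`, `R f = f|_A`, is a surjective linear map which is continuous and
open with respect to the topologies of pointwise convergence. -/
theorem statement13 {Y : Type*} [TopologicalSpace Y] [CompactSpace Y]
    [TopologicalSpace.MetrizableSpace Y] (A : Set Y) (hA : IsClosed A) :
    Function.Surjective (fun f : C(Y, ℝ) => f.restrict A) ∧
    (∀ f g : C(Y, ℝ), (f + g).restrict A = f.restrict A + g.restrict A) ∧
    (∀ (c : ℝ) (f : C(Y, ℝ)), (c • f).restrict A = c • f.restrict A) ∧
    @Continuous _ _ (cpTop Y) (cpTop A) (fun f : C(Y, ℝ) => f.restrict A) ∧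
    @IsOpenMap _ _ (cpTop Y) (cpTop A) (fun f : C(Y, ℝ) => f.restrict A) :=
  statement13_general A hA
end

section
/- Let X ⊆ [0,1]^3 be a Kolmogorov-type embedding of a compact metric space X with respect to a Kolmogorov family of covers (F^m)_{m∈ℕ} (with n = 1), and assume the embedding separates every cover F^m. Let x ∈ X and suppose that each of the three coordinates p_1(x), p_2(x), p_3(x) of x (each p_i(x) regarded as a point of the copy Y_i of [0,1] inside Z) is either strongly reserved or fully free with respect to (F^m). Then at least two of the three coordinates of x are reserved by x. -/
open Topology

/-- The closed set `s ⊆ X` meets the fiber `pᵢ⁻¹(z)` of the `i`-th coordinate projection. -/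
def MeetsFiber {N : ℕ} (X : Set (Fin N → unitInterval)) (i : Fin N)
    (z : unitInterval) (s : Set X) : Prop :=
  ∃ x ∈ s, (x : Fin N → unitInterval) i = z

/-- The point `z` of the copy `Yᵢ` of `[0,1]` inside `Z` is reserved with respect to the
subfamily `(F m)_{m ∈ S}`: for all but finitely many `m ∈ S` some member of `F m i` meets
`pᵢ⁻¹(z)`. -/
def ReservedOn {N : ℕ} (X : Set (Fin N → unitInterval))
    (F : ℕ → Fin N → Finset (Set X)) (S : Set ℕ) (i : Fin N) (z : unitInterval) : Prop :=
  {m ∈ S | ¬ ∃ s ∈ F m i, MeetsFiber X i z s}.Finite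

/-- The point `z` of the copy `Yᵢ` of `[0,1]` inside `Z` is strongly reserved by `x ∈ X`
with respect to the subfamily `(F m)_{m ∈ S}`: for every `m ∈ S` some member of `F m i`
meets `pᵢ⁻¹(z)`, and the collection of all such members converges to `x`, i.e. every
neighborhood of `x` contains all but finitely many members of the collection. -/
def StronglyReservedByOn {N : ℕ} (X : Set (Fin N → unitInterval))
    (F : ℕ → Fin N → Finset (Set X)) (S : Set ℕ) (i : Fin N) (z : unitInterval)
    (x : X) : Prop :=
  (∀ m ∈ S, ∃ s ∈ F m i, MeetsFiber X i z s) ∧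
  ∀ U ∈ nhds x, {m ∈ S | ∃ s ∈ F m i, MeetsFiber X i z s ∧ ¬ s ⊆ U}.Finite

/-- `z` is strongly reserved with respect to `(F m)_{m ∈ S}` if it is strongly reserved by
some point `x ∈ X`. -/
def StronglyReservedOn {N : ℕ} (X : Set (Fin N → unitInterval))
    (F : ℕ → Fin N → Finset (Set X)) (S : Set ℕ) (i : Fin N) (z : unitInterval) : Prop :=
  ∃ x : X, StronglyReservedByOn X F S i z x

/-- `z` is fully free with respect to `(F m)_{m ∈ S}`: for every `m ∈ S` no member of
`F m i` meets `pᵢ⁻¹(z)`. -/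
def FullyFreeOn {N : ℕ} (X : Set (Fin N → unitInterval))
    (F : ℕ → Fin N → Finset (Set X)) (S : Set ℕ) (i : Fin N) (z : unitInterval) : Prop :=
  ∀ m ∈ S, ∀ s ∈ F m i, ¬ MeetsFiber X i z s

/-- If `X ⊆ [0,1]³` is a Kolmogorov-type embedding separating every cover of the Kolmogorov
family `(F m)` and every coordinate of `x ∈ X` is either strongly reserved or fully free
with respect to `(F m)`, then at least two of the three coordinates of `x` are reserved
by `x`. -/
theorem statement14 (X : Set (Fin 3 → unitInterval)) [CompactSpace X]
    (F : ℕ → Fin 3 → Finset (Set X))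
    (hF : IsKolmogorovFamily X 1 F)
    (hemb : IsKolmogorovTypeEmbedding X F)
    (hsep : ∀ m, KolSeparates X (F m))
    (x : X)
    (hx : ∀ i : Fin 3,
      StronglyReservedOn X F Set.univ i ((x : Fin 3 → unitInterval) i) ∨
      FullyFreeOn X F Set.univ i ((x : Fin 3 → unitInterval) i)) :
    2 ≤ {i : Fin 3 |
      StronglyReservedByOn X F Set.univ i ((x : Fin 3 → unitInterval) i) x}.ncard := by
  obtain ⟨hclosed, hcover, hdisj, hmesh⟩ := hF
  set M : Fin 3 → Set ℕ := fun i => {m | ∃ s ∈ F m i, x ∈ s} with hM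
  have hRsub : ∀ i : Fin 3, (M i).Infinite →
      StronglyReservedByOn X F Set.univ i ((x : Fin 3 → unitInterval) i) x := by
    intro i hi
    obtain ⟨m₀, hm₀⟩ := hi.nonempty
    have hnff : ¬ FullyFreeOn X F Set.univ i ((x : Fin 3 → unitInterval) i) := by
      obtain ⟨s, hs, hxs⟩ := hm₀
      intro h
      exact h m₀ trivial s hs ⟨x, hxs, rfl⟩
    obtain ⟨y, hy⟩ := (hx i).resolve_right hnff
    have hxy : x = y := by
      have hpure : ∀ U ∈ 𝓝 y, x ∈ U := by
        intro U hU
        have hfin := hy.2 U hU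
        obtain ⟨m, hmMi, hmB⟩ := (hi.diff hfin).nonempty
        obtain ⟨s, hs, hxs⟩ := hmMi
        by_contra hxU
        exact hmB ⟨trivial, s, hs, ⟨x, hxs, rfl⟩, fun hsub => hxU (hsub hxs)⟩
      exact specializes_iff_eq.mp (specializes_iff_pure.mpr (fun U hU => hpure U hU))
    exact hxy ▸ hy
  have hR2 : 2 ≤ {i : Fin 3 | (M i).Infinite}.ncard := by
    by_contra h
    push_neg at h
    have hBfin : (⋃ i ∈ {i : Fin 3 | ¬ (M i).Infinite}, M i).Finite := by
      apply Set.Finite.biUnion (Set.toFinite _)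
      intro i hi
      exact Set.not_infinite.mp hi
    obtain ⟨m, hm⟩ := hBfin.infinite_compl.nonempty
    have hIm := hcover m x
    have hsub : {i : Fin 3 | ∃ s ∈ F m i, x ∈ s} ⊆ {i : Fin 3 | (M i).Infinite} := by
      intro i hi
      by_contra hiR
      exact hm (Set.mem_biUnion hiR hi)
    have hle := Set.ncard_le_ncard hsub (Set.toFinite _)
    omega
  calc 2 ≤ {i : Fin 3 | (M i).Infinite}.ncard := hR2
    _ ≤ _ := Set.ncard_le_ncard (fun i hi => hRsub i hi) (Set.toFinite _)
end

section
/- Let X ⊆ [0,1]^3 be a Kolmogorov-type embedding of a compact metric space X with respect to a Kolmogorov family of covers (F^m)_{m∈ℕ} (with n = 1), and assume the embedding separates every cover F^m. Let z be a point of one of the three copies Y_i of [0,1] inside Z. If z is reserved with respect to (F^m), then there is an infinite subset S ⊆ ℕ such that z is strongly reserved with respect to the subfamily (F^m)_{m∈S}. If z is free with respect to (F^m), then there is an infinite subset S ⊆ ℕ such that z is fully free with respect to the subfamily (F^m)_{m∈S}. -/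
open Topology

/-- Passing to subfamilies: for a Kolmogorov-type embedding `X ⊆ [0,1]³` separating every
cover of the Kolmogorov family `(F m)`, if a point `z` of the copy `Yᵢ` of `[0,1]` inside
`Z` is reserved then it is strongly reserved with respect to some infinite subfamily
`(F m)_{m ∈ S}`, and if `z` is free (not reserved) then it is fully free with respect to
some infinite subfamily `(F m)_{m ∈ S}`. -/
theorem statement15 (X : Set (Fin 3 → unitInterval)) [CompactSpace X]
    (F : ℕ → Fin 3 → Finset (Set X))
    (hF : IsKolmogorovFamily X 1 F)
    (hemb : IsKolmogorovTypeEmbedding X F)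
    (hsep : ∀ m, KolSeparates X (F m))
    (i : Fin 3) (z : unitInterval) :
    (ReservedOn X F Set.univ i z →
      ∃ S : Set ℕ, S.Infinite ∧ StronglyReservedOn X F S i z) ∧
    (¬ ReservedOn X F Set.univ i z →
      ∃ S : Set ℕ, S.Infinite ∧ FullyFreeOn X F S i z) := by
  constructor
  · intro hres
    set T : Set ℕ := {m | ∃ s ∈ F m i, MeetsFiber X i z s} with hTdef
    have hTinf : T.Infinite := by
      apply Set.infinite_of_finite_compl
      have : Tᶜ = {m ∈ Set.univ | ¬ ∃ s ∈ F m i, MeetsFiber X i z s} := by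
        ext m; simp [hTdef]
      rw [this]; exact hres
    set e : ℕ → ℕ := Nat.nth (· ∈ T) with he
    have hemem : ∀ k, e k ∈ T := fun k => Nat.nth_mem_of_infinite hTinf k
    have hemono : StrictMono e := Nat.nth_strictMono hTinf
    have hsel : ∀ k, ∃ s ∈ F (e k) i, MeetsFiber X i z s := fun k => hemem k
    choose s hs hmeet using hsel
    choose w hw hwz using hmeet
    obtain ⟨x, -, φ, hφ, hconv⟩ :=
      isCompact_univ.tendsto_subseq (x := w) (fun n => Set.mem_univ _)
    refine ⟨Set.range (fun k => e (φ k)), ?_, x, ?_, ?_⟩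
    · exact Set.infinite_range_of_injective (hemono.comp hφ).injective
    · rintro m ⟨k, rfl⟩
      exact ⟨s (φ k), hs (φ k), w (φ k), hw (φ k), hwz (φ k)⟩
    · intro U hU
      obtain ⟨ε, εpos, hball⟩ := Metric.mem_nhds_iff.mp hU
      obtain ⟨M, hM⟩ := hF.2.2.2 (ε/2) (by positivity)
      obtain ⟨K, hK⟩ := (Metric.tendsto_atTop.mp hconv) (ε/2) (by positivity)
      apply Set.Finite.subset (Set.finite_Iio (max M (e (φ K))))
      intro m hm
      simp only [Set.mem_sep_iff, Set.mem_range] at hm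
      obtain ⟨⟨k, rfl⟩, t, ht, ⟨v, hv, hvz⟩, htU⟩ := hm
      by_contra hlt
      simp only [Set.mem_Iio, not_lt, max_le_iff] at hlt
      obtain ⟨hMle, hKle⟩ := hlt
      have hkK : K ≤ k := ((hemono.comp hφ).le_iff_le).mp hKle
      -- t equals s (φ k) by separation
      have hts : t = s (φ k) := by
        by_contra hne
        have hd := hsep (e (φ k)) i t ht (s (φ k)) (hs (φ k)) hne
        exact Set.disjoint_left.mp hd ⟨v, hv, hvz⟩
          ⟨w (φ k), hw (φ k), hwz (φ k)⟩
      apply htU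
      intro u hu
      apply hball
      have h1 : dist u (w (φ k)) < ε/2 := by
        calc dist u (w (φ k)) ≤ Metric.diam t :=
              Metric.dist_le_diam_of_mem Metric.isBounded_of_compactSpace hu
                (hts ▸ hw (φ k))
          _ < ε/2 := hM (e (φ k)) hMle i t ht
      have h2 : dist (w (φ k)) x < ε/2 := hK k hkK
      have : dist u x < ε := by
        calc dist u x ≤ dist u (w (φ k)) + dist (w (φ k)) x := dist_triangle _ _ _
          _ < ε/2 + ε/2 := add_lt_add h1 h2
          _ = ε := by ring
      exact this
  · intro hfree
    refine ⟨{m | ¬ ∃ s ∈ F m i, MeetsFiber X i z s}, ?_, ?_⟩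
    · by_contra hfin
      rw [Set.not_infinite] at hfin
      apply hfree
      have : {m ∈ Set.univ | ¬ ∃ s ∈ F m i, MeetsFiber X i z s}
          = {m | ¬ ∃ s ∈ F m i, MeetsFiber X i z s} := by ext m; simp
      rw [ReservedOn, this]
      exact hfin
    · intro m hm t ht hmt
      exact hm ⟨t, ht, hmt⟩
end
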